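/- arXiv:2510.16538 — 10 statements merged into one kernel-verified Lean document; each statement's English description precedes it below -/
import Mathlib

section
/- Let J ⊆ I be ideals in a commutative ring R such that J is a demotion of I, i.e., I^r J^s = I^(r+s) ∩ J^s for all r, s ≥ 0. Then for every positive integer k, J^k is a demotion of I^k: (I^k)^r (J^k)^s = (I^k)^(r+s) ∩ (J^k)^s for all r, s ≥ 0. -/
theorem stmt_3_general {R : Type*} [CommRing R] (I J : Ideal R)
    (h : ∀ r s : ℕ, I ^ r * J ^ s = I ^ (r + s) ⊓ J ^ s) (k : ℕ) :
    ∀ r s : ℕ, (I ^ k) ^ r * (J ^ k) ^ s = (I ^ k) ^ (r + s) ⊓ (J ^ k) ^ s := by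
  intro r s
  simp only [← pow_mul]
  rw [h (k * r) (k * s), Nat.mul_add]

theorem stmt_3 {R : Type*} [CommRing R] (I J : Ideal R) (hJI : J ≤ I)
    (h : ∀ r s : ℕ, I ^ r * J ^ s = I ^ (r + s) ⊓ J ^ s) (k : ℕ) (hk : 1 ≤ k) :
    ∀ r s : ℕ, (I ^ k) ^ r * (J ^ k) ^ s = (I ^ k) ^ (r + s) ⊓ (J ^ k) ^ s :=
  stmt_3_general I J h k
end

section
/- Let f : R → S be a ring homomorphism with S flat over R, and let J ⊆ I be ideals of R. If I^r J^s = I^(r+s) ∩ J^s for all r, s ≥ 0, then (IS)^r (JS)^s = (IS)^(r+s) ∩ (JS)^s for all r, s ≥ 0, where IS denotes the extension of I to S. -/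
open TensorProduct in
lemma flat_map_inf_aux {R S : Type*} [CommRing R] [CommRing S] [Algebra R S] [Module.Flat R S]
    (A B : Ideal R) :
    Ideal.map (algebraMap R S) (A ⊓ B) =
      Ideal.map (algebraMap R S) A ⊓ Ideal.map (algebraMap R S) B := by
  refine le_antisymm (le_inf (Ideal.map_mono inf_le_left) (Ideal.map_mono inf_le_right)) ?_
  intro x hx
  obtain ⟨hxA, hxB⟩ := hx
  set K : Ideal R := A ⊓ B with hK
  -- reformulate membership via smul top
  have hxA' : x ∈ (A • ⊤ : Submodule R S) := by
    rw [Ideal.smul_top_eq_map]; exact hxA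
  have hxB' : x ∈ (B • ⊤ : Submodule R S) := by
    rw [Ideal.smul_top_eq_map]; exact hxB
  suffices hmem : x ∈ (K • ⊤ : Submodule R S) by
    rw [Ideal.smul_top_eq_map] at hmem; exact hmem
  -- the injective map R⧸K → R⧸A × R⧸B
  let φa : (R ⧸ K) →ₗ[R] (R ⧸ A) := Submodule.mapQ _ _ LinearMap.id (by
    intro r hr; exact hr.1)
  let φb : (R ⧸ K) →ₗ[R] (R ⧸ B) := Submodule.mapQ _ _ LinearMap.id (by
    intro r hr; exact hr.2)
  let φ : (R ⧸ K) →ₗ[R] ((R ⧸ A) × (R ⧸ B)) := φa.prod φb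
  have hφ : Function.Injective φ := by
    rw [← LinearMap.ker_eq_bot, LinearMap.ker_eq_bot']
    intro m hm
    induction m using Submodule.Quotient.induction_on with
    | H r =>
      have h1 : (φ (Submodule.Quotient.mk r)).1 = 0 := by rw [hm]; rfl
      have h2 : (φ (Submodule.Quotient.mk r)).2 = 0 := by rw [hm]; rfl
      simp only [φ, φa, φb, LinearMap.prod_apply, Function.prod, Submodule.mapQ_apply,
        LinearMap.id_coe, id_eq] at h1 h2
      rw [Submodule.Quotient.mk_eq_zero] at h1 h2 ⊢
      exact ⟨h1, h2⟩
  have hinj : Function.Injective (LinearMap.lTensor S φ) :=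
    Module.Flat.lTensor_preserves_injective_linearMap φ hφ
  -- consider t = x ⊗ mk 1
  set t : S ⊗[R] (R ⧸ K) := x ⊗ₜ (Submodule.Quotient.mk 1) with ht
  have htz : LinearMap.lTensor S φ t = 0 := by
    refine (LinearEquiv.map_eq_zero_iff (TensorProduct.prodRight R R S (R ⧸ A) (R ⧸ B))).mp ?_
    have : LinearMap.lTensor S φ t = x ⊗ₜ (φ (Submodule.Quotient.mk 1)) := rfl
    rw [this]
    have hφ1 : φ (Submodule.Quotient.mk 1) =
        (Submodule.Quotient.mk 1, Submodule.Quotient.mk 1) := rfl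
    rw [hφ1, TensorProduct.prodRight_tmul]
    have hA0 : (x ⊗ₜ (Submodule.Quotient.mk 1) : S ⊗[R] (R ⧸ A)) = 0 := by
      refine (LinearEquiv.map_eq_zero_iff (tensorQuotEquivQuotSMul S A)).mp ?_
      have : (Submodule.Quotient.mk (1 : R) : R ⧸ A) = Ideal.Quotient.mk A 1 := rfl
      rw [this, tensorQuotEquivQuotSMul_tmul_mk, one_smul,
        Submodule.Quotient.mk_eq_zero]
      exact hxA'
    have hB0 : (x ⊗ₜ (Submodule.Quotient.mk 1) : S ⊗[R] (R ⧸ B)) = 0 := by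
      refine (LinearEquiv.map_eq_zero_iff (tensorQuotEquivQuotSMul S B)).mp ?_
      have : (Submodule.Quotient.mk (1 : R) : R ⧸ B) = Ideal.Quotient.mk B 1 := rfl
      rw [this, tensorQuotEquivQuotSMul_tmul_mk, one_smul,
        Submodule.Quotient.mk_eq_zero]
      exact hxB'
    rw [hA0, hB0]
    rfl
  have ht0 : t = 0 := hinj (by rw [htz, map_zero])
  have := congrArg (tensorQuotEquivQuotSMul S K) ht0
  rw [map_zero, ht] at this
  have hmk : (Submodule.Quotient.mk (1 : R) : R ⧸ K) = Ideal.Quotient.mk K 1 := rfl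
  rw [hmk, tensorQuotEquivQuotSMul_tmul_mk, one_smul, Submodule.Quotient.mk_eq_zero] at this
  exact this

theorem stmt_4 {R S : Type*} [CommRing R] [CommRing S] [Algebra R S] [Module.Flat R S]
    (I J : Ideal R) (hJI : J ≤ I)
    (h : ∀ r s : ℕ, I ^ r * J ^ s = I ^ (r + s) ⊓ J ^ s) :
    ∀ r s : ℕ,
      (Ideal.map (algebraMap R S) I) ^ r * (Ideal.map (algebraMap R S) J) ^ s =
      (Ideal.map (algebraMap R S) I) ^ (r + s) ⊓ (Ideal.map (algebraMap R S) J) ^ s := by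
  intro r s
  rw [← Ideal.map_pow, ← Ideal.map_pow, ← Ideal.map_pow, ← Ideal.map_mul, h r s,
    flat_map_inf_aux]
end

section
/- Let f : R → S be a ring homomorphism with S faithfully flat over R, and let J ⊆ I be ideals of R. If (IS)^r (JS)^s = (IS)^(r+s) ∩ (JS)^s for all r, s ≥ 0, then I^r J^s = I^(r+s) ∩ J^s for all r, s ≥ 0. -/
open TensorProduct in
lemma ff_comap_map {R S : Type*} [CommRing R] [CommRing S] [Algebra R S]
    [Module.FaithfullyFlat R S] (I : Ideal R) :
    (I.map (algebraMap R S)).comap (algebraMap R S) = I := by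
  refine le_antisymm (fun x hx => ?_) (Ideal.le_comap_map)
  have hxS : algebraMap R S x ∈ I.map (algebraMap R S) := hx
  -- consider f : R →ₗ[R] R ⧸ I, r ↦ mk (r * x)
  set f : R →ₗ[R] R ⧸ I :=
    (Submodule.mkQ (I.restrictScalars R)) ∘ₗ (LinearMap.toSpanSingleton R R x) with hf
  have hf0 : f = 0 := by
    rw [Module.FaithfullyFlat.zero_iff_lTensor_zero R S f]
    apply TensorProduct.ext'
    intro s r
    have : LinearMap.lTensor S f (s ⊗ₜ r) = s ⊗ₜ (Ideal.Quotient.mk I (r * x)) := by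
      simp [hf, LinearMap.toSpanSingleton_apply, smul_eq_mul]
      rfl
    rw [this]
    apply (TensorProduct.tensorQuotEquivQuotSMul S I).injective
    rw [TensorProduct.tensorQuotEquivQuotSMul_tmul_mk]
    simp only [LinearMap.zero_apply, map_zero]
    rw [Submodule.Quotient.mk_eq_zero]
    rw [Ideal.smul_top_eq_map]
    show (r * x) • s ∈ I.map (algebraMap R S)
    rw [Algebra.smul_def, map_mul]
    exact Ideal.mul_mem_right s _ (Ideal.mul_mem_left _ _ hxS)
  have h1 := congrFun (congrArg DFunLike.coe hf0) 1
  have : Submodule.Quotient.mk (p := I.restrictScalars R) x = 0 := by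
    have h2 : (Submodule.mkQ (I.restrictScalars R)) ((1 : R) • x) = 0 := h1
    simpa using h2
  exact (Submodule.Quotient.mk_eq_zero _).mp this

theorem stmt_5 {R S : Type*} [CommRing R] [CommRing S] [Algebra R S]
    [Module.FaithfullyFlat R S]
    (I J : Ideal R) (hJI : J ≤ I)
    (h : ∀ r s : ℕ,
      (Ideal.map (algebraMap R S) I) ^ r * (Ideal.map (algebraMap R S) J) ^ s =
      (Ideal.map (algebraMap R S) I) ^ (r + s) ⊓ (Ideal.map (algebraMap R S) J) ^ s) :
    ∀ r s : ℕ, I ^ r * J ^ s = I ^ (r + s) ⊓ J ^ s := by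
  intro r s
  refine le_antisymm (le_inf ?_ ?_) ?_
  · rw [pow_add]; exact Ideal.mul_mono le_rfl (Ideal.pow_right_mono hJI s)
  · exact le_trans Ideal.mul_le_right le_rfl
  · intro x hx
    obtain ⟨hx1, hx2⟩ := hx
    have hS : algebraMap R S x ∈ Ideal.map (algebraMap R S) (I ^ r * J ^ s) := by
      rw [Ideal.map_mul, Ideal.map_pow, Ideal.map_pow, h r s]
      exact ⟨by rw [← Ideal.map_pow]; exact Ideal.mem_map_of_mem _ hx1,
             by rw [← Ideal.map_pow]; exact Ideal.mem_map_of_mem _ hx2⟩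
    have := ff_comap_map (R := R) (S := S) (I ^ r * J ^ s)
    rw [← this]
    exact hS
end

section
/- Let p = (x_1, ..., x_c) and q = (x_1, ..., x_d) be monomial prime ideals in the polynomial ring K[x_1, ..., x_n] with d ≤ c ≤ n (so q ⊆ p). Then for all r, s ≥ 0, p^r * q^s = p^(r+s) ∩ q^s; that is, q is a demotion of p. -/
open MvPolynomial

namespace Stmt6Aux

variable {K : Type*} [Field K] {n : ℕ}

/-- weight of an exponent vector on the first `c` variables -/
def wdeg (c : ℕ) (m : Fin n →₀ ℕ) : ℕ :=
  ∑ i ∈ Finset.univ.filter (fun i : Fin n => (i : ℕ) < c), m i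

lemma wdeg_add (c : ℕ) (a b : Fin n →₀ ℕ) : wdeg c (a + b) = wdeg c a + wdeg c b := by
  simp [wdeg, Finset.sum_add_distrib]

lemma wdeg_single {c : ℕ} {i : Fin n} (hi : (i : ℕ) < c) :
    wdeg c (Finsupp.single i 1) = 1 := by
  rw [wdeg, Finset.sum_eq_single_of_mem i (by simp [hi])]
  · simp
  · intro j _ hj; simp [Finsupp.single_apply, (Ne.symm hj)]

lemma exists_pos_of_wdeg {c : ℕ} {m : Fin n →₀ ℕ} (h : 1 ≤ wdeg c m) :
    ∃ i : Fin n, (i : ℕ) < c ∧ 1 ≤ m i := by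
  by_contra hcon
  push_neg at hcon
  have h0 : wdeg c m = 0 := Finset.sum_eq_zero (fun i hi => by
    have := hcon i (Finset.mem_filter.mp hi).2; omega)
  omega

def W (c k : ℕ) (f : MvPolynomial (Fin n) K) : Prop :=
  ∀ m ∈ f.support, k ≤ wdeg c m

lemma W_mul {c a b : ℕ} {f g : MvPolynomial (Fin n) K} (hf : W c a f) (hg : W c b g) :
    W c (a + b) (f * g) := by
  intro m hm
  have := MvPolynomial.support_mul f g hm
  rw [Finset.mem_add] at this
  obtain ⟨m1, hm1, m2, hm2, rfl⟩ := this
  rw [wdeg_add]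
  exact Nat.add_le_add (hf m1 hm1) (hg m2 hm2)

def J (c k : ℕ) : Ideal (MvPolynomial (Fin n) K) where
  carrier := {f | W c k f}
  zero_mem' := by intro m hm; simp at hm
  add_mem' := by
    intro f g hf hg m hm
    rcases Finset.mem_union.mp (MvPolynomial.support_add hm) with h | h
    · exact hf m h
    · exact hg m h
  smul_mem' := by
    intro r f hf
    have : W c (0 + k) (r * f) := W_mul (fun m _ => Nat.zero_le _) hf
    simpa using this

end Stmt6Aux

namespace Stmt6Aux2
open Stmt6Aux

variable {K : Type*} [Field K] {n : ℕ}

noncomputable def P (K : Type*) [Field K] (n c : ℕ) : Ideal (MvPolynomial (Fin n) K) :=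
  Ideal.span ((fun i => (X i : MvPolynomial (Fin n) K)) '' {i | (i : ℕ) < c})

lemma X_mem_P {c : ℕ} {i : Fin n} (hi : (i : ℕ) < c) : (X i : MvPolynomial (Fin n) K) ∈ P K n c :=
  Ideal.subset_span ⟨i, hi, rfl⟩

lemma P_le_J (c : ℕ) : P K n c ≤ (J c 1 : Ideal (MvPolynomial (Fin n) K)) := by
  rw [P, Ideal.span_le]
  rintro _ ⟨i, hi, rfl⟩
  intro m hm
  rw [MvPolynomial.support_X, Finset.mem_singleton] at hm
  rw [hm, wdeg_single hi]

lemma pow_le_J (c k : ℕ) : (P K n c) ^ k ≤ (J c k : Ideal (MvPolynomial (Fin n) K)) := by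
  induction k with
  | zero => intro f _ m _; exact Nat.zero_le _
  | succ k ih =>
      rw [pow_succ]
      refine Ideal.mul_le.mpr (fun f hf g hg => ?_)
      exact W_mul (ih hf) (P_le_J c hg)

lemma monomial_mem_pow {c k : ℕ} {m : Fin n →₀ ℕ} (h : k ≤ wdeg c m) :
    (monomial m (1 : K)) ∈ (P K n c) ^ k := by
  induction k generalizing m with
  | zero => simp
  | succ k ih =>
      obtain ⟨i, hi, hmi⟩ := exists_pos_of_wdeg (le_trans (Nat.le_add_left 1 k) h)
      have hle : Finsupp.single i 1 ≤ m := Finsupp.single_le_iff.mpr hmi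
      have hdec : Finsupp.single i 1 + (m - Finsupp.single i 1) = m :=
        add_tsub_cancel_of_le hle
      have hw : k ≤ wdeg c (m - Finsupp.single i 1) := by
        have := wdeg_add c (Finsupp.single i 1) (m - Finsupp.single i 1)
        rw [hdec, wdeg_single hi] at this
        omega
      have hmul : (monomial m (1 : K)) = X i * monomial (m - Finsupp.single i 1) 1 := by
        rw [MvPolynomial.X, monomial_mul, hdec, one_mul]
      rw [hmul, pow_succ, mul_comm ((P K n c) ^ k)]
      exact Ideal.mul_mem_mul (X_mem_P hi) (ih hw)

lemma monomial_mem_mul {c d r s : ℕ} (hdc : d ≤ c) {m : Fin n →₀ ℕ}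
    (h1 : r + s ≤ wdeg c m) (h2 : s ≤ wdeg d m) :
    (monomial m (1 : K)) ∈ (P K n c) ^ r * (P K n d) ^ s := by
  induction s generalizing m with
  | zero => simpa using monomial_mem_pow (by omega : r ≤ wdeg c m)
  | succ s ih =>
      obtain ⟨i, hi, hmi⟩ := exists_pos_of_wdeg (le_trans (Nat.le_add_left 1 s) h2)
      have hic : (i : ℕ) < c := lt_of_lt_of_le hi hdc
      have hle : Finsupp.single i 1 ≤ m := Finsupp.single_le_iff.mpr hmi
      have hdec : Finsupp.single i 1 + (m - Finsupp.single i 1) = m :=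
        add_tsub_cancel_of_le hle
      have hwc : r + s ≤ wdeg c (m - Finsupp.single i 1) := by
        have := wdeg_add c (Finsupp.single i 1) (m - Finsupp.single i 1)
        rw [hdec, wdeg_single hic] at this
        omega
      have hwd : s ≤ wdeg d (m - Finsupp.single i 1) := by
        have := wdeg_add d (Finsupp.single i 1) (m - Finsupp.single i 1)
        rw [hdec, wdeg_single hi] at this
        omega
      have hmul : (monomial m (1 : K)) = X i * monomial (m - Finsupp.single i 1) 1 := by
        rw [MvPolynomial.X, monomial_mul, hdec, one_mul]
      have : (monomial m (1 : K)) ∈ (P K n d) * ((P K n c) ^ r * (P K n d) ^ s) := by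
        rw [hmul]
        exact Ideal.mul_mem_mul (X_mem_P hi) (ih hwc hwd)
      have heq : (P K n c) ^ r * (P K n d) ^ (s + 1)
          = P K n d * ((P K n c) ^ r * (P K n d) ^ s) := by
        rw [pow_succ]; ring
      rw [heq]
      exact this

end Stmt6Aux2

open Stmt6Aux Stmt6Aux2 in
theorem stmt_6 {K : Type*} [Field K] (n c d : ℕ) (hd : 1 ≤ d) (hdc : d ≤ c) (hcn : c ≤ n)
    (p q : Ideal (MvPolynomial (Fin n) K))
    (hp : p = Ideal.span ((fun i => (X i : MvPolynomial (Fin n) K)) '' {i | (i : ℕ) < c}))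
    (hq : q = Ideal.span ((fun i => (X i : MvPolynomial (Fin n) K)) '' {i | (i : ℕ) < d})) :
    ∀ r s : ℕ, p ^ r * q ^ s = p ^ (r + s) ⊓ q ^ s := by
  have hp' : p = P K n c := hp
  have hq' : q = P K n d := hq
  subst hp' hq'
  intro r s
  have hqp : P K n d ≤ P K n c :=
    Ideal.span_mono (Set.image_mono (fun i hi => lt_of_lt_of_le hi hdc))
  apply le_antisymm
  · refine le_inf ?_ ?_
    · rw [pow_add]
      exact Ideal.mul_mono_right (Ideal.pow_right_mono hqp s)
    · exact Ideal.mul_le_right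
  · intro f hf
    obtain ⟨hf1, hf2⟩ := hf
    have hrw : f = ∑ m ∈ f.support, monomial m (coeff m f) := (f.as_sum)
    rw [hrw]
    apply Ideal.sum_mem
    intro m hm
    have hc : r + s ≤ wdeg c m := pow_le_J c (r + s) hf1 m hm
    have hd2 : s ≤ wdeg d m := pow_le_J d s hf2 m hm
    have hsm : monomial m (coeff m f) = C (coeff m f) * monomial m (1 : K) := by
      rw [C_mul_monomial, mul_one]
    rw [hsm]
    exact Ideal.mul_mem_left _ _ (monomial_mem_mul (K := K) hdc hc hd2)
end

section
/- Let p = (x_1, ..., x_m) in K[x_1, ..., x_n] with 1 ≤ m ≤ n, and let J = (x_1^m, ..., x_m^m). Then for all r, s ≥ 0, (p^m)^r * J^s = (p^m)^(r+s) ∩ J^s; that is, J is a demotion of p^m. -/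
open MvPolynomial Pointwise

namespace Stmt7Aux

variable {K : Type*} [Field K] (n m : ℕ)

/-- degree in the first `m` variables -/
def degm (d : Fin n →₀ ℕ) : ℕ :=
  ∑ i ∈ Finset.univ.filter (fun i : Fin n => (i : ℕ) < m), d i

lemma degm_add (d e : Fin n →₀ ℕ) : degm n m (d + e) = degm n m d + degm n m e := by
  simp [degm, Finset.sum_add_distrib]

lemma degm_smul (k : ℕ) (d : Fin n →₀ ℕ) : degm n m (k • d) = k * degm n m d := by
  simp [degm, Finset.mul_sum]

lemma degm_mono {d e : Fin n →₀ ℕ} (h : d ≤ e) : degm n m d ≤ degm n m e :=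
  Finset.sum_le_sum fun i _ => h i

lemma degm_single {i : Fin n} (hi : (i : ℕ) < m) (k : ℕ) :
    degm n m (Finsupp.single i k) = k := by
  rw [degm, Finset.sum_eq_single_of_mem i
      (Finset.mem_filter.2 ⟨Finset.mem_univ _, hi⟩)
      (fun j _ hj => Finsupp.single_eq_of_ne' (Ne.symm hj))]
  simp

lemma sum_add (d e : Fin n →₀ ℕ) :
    ((d + e).sum fun _ x => x) = (d.sum fun _ x => x) + (e.sum fun _ x => x) :=
  Finsupp.sum_add_index' (fun _ => rfl) (fun _ _ _ => rfl)

lemma sum_single (i : Fin n) (k : ℕ) :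
    ((Finsupp.single i k).sum fun _ x => x) = k :=
  Finsupp.sum_single_index rfl

lemma degm_eq_sum {d : Fin n →₀ ℕ} (hd : ∀ i, d i ≠ 0 → (i : ℕ) < m) :
    degm n m d = d.sum fun _ x => x := by
  rw [Finsupp.sum]
  exact (Finset.sum_subset
    (fun i hi => Finset.mem_filter.2 ⟨Finset.mem_univ _, hd i (Finsupp.mem_support_iff.1 hi)⟩)
    (fun i _ hi => by simpa using Finsupp.notMem_support_iff.1 hi)).symm

lemma span_monomial_mul (A B : Set (Fin n →₀ ℕ)) :
    Ideal.span ((fun e => monomial e (1 : K)) '' A) *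
      Ideal.span ((fun e => monomial e (1 : K)) '' B) ≤
    Ideal.span ((fun e => monomial e (1 : K)) '' (A + B)) := by
  rw [Ideal.mul_le]
  intro f hf g hg
  rw [mem_ideal_span_monomial_image] at hf hg ⊢
  intro d hd
  obtain ⟨d1, h1, d2, h2, rfl⟩ := Finset.mem_add.mp (MvPolynomial.support_mul f g hd)
  obtain ⟨e1, he1, hle1⟩ := hf d1 h1
  obtain ⟨e2, he2, hle2⟩ := hg d2 h2
  exact ⟨e1 + e2, Set.add_mem_add he1 he2, add_le_add hle1 hle2⟩

variable {n m} in
lemma pow_le_degm {p : Ideal (MvPolynomial (Fin n) K)}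
    (hp : p = Ideal.span ((fun i => (X i : MvPolynomial (Fin n) K)) '' {i | (i : ℕ) < m}))
    (k : ℕ) :
    p ^ k ≤ Ideal.span ((fun e => monomial e (1 : K)) '' {e | k ≤ degm n m e}) := by
  induction k with
  | zero =>
    intro f _
    rw [mem_ideal_span_monomial_image]
    exact fun d _ => ⟨d, Nat.zero_le _, le_rfl⟩
  | succ k ih =>
    have hp1 : p ≤ Ideal.span ((fun e => monomial e (1 : K)) '' {e | 1 ≤ degm n m e}) := by
      rw [hp, Ideal.span_le]
      rintro _ ⟨i, hi, rfl⟩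
      have hi' : (i : ℕ) < m := hi
      rw [SetLike.mem_coe, mem_ideal_span_monomial_image]
      intro d hd
      rw [MvPolynomial.support_X, Finset.mem_singleton] at hd
      subst hd
      exact ⟨Finsupp.single i 1, le_of_eq (degm_single n m hi' 1).symm, le_rfl⟩
    calc p ^ (k + 1) = p ^ k * p := pow_succ p k
      _ ≤ _ * _ := Ideal.mul_mono ih hp1
      _ ≤ Ideal.span ((fun e => monomial e (1 : K)) ''
            ({e | k ≤ degm n m e} + {e | 1 ≤ degm n m e})) := span_monomial_mul n _ _
      _ ≤ _ := by
        apply Ideal.span_mono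
        apply Set.image_mono
        rintro _ ⟨e1, he1, e2, he2, rfl⟩
        have := degm_add n m e1 e2
        simp only [Set.mem_setOf_eq] at he1 he2 ⊢
        omega

variable {n m} in
lemma Jpow_le {J : Ideal (MvPolynomial (Fin n) K)}
    (hJ : J = Ideal.span ((fun i => (X i : MvPolynomial (Fin n) K) ^ m) '' {i | (i : ℕ) < m}))
    (s : ℕ) :
    J ^ s ≤ Ideal.span ((fun e => monomial e (1 : K)) ''
      {e | ∃ a : Fin n →₀ ℕ, (∀ i, a i ≠ 0 → (i : ℕ) < m) ∧
        (a.sum fun _ x => x) = s ∧ e = m • a}) := by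
  induction s with
  | zero =>
    intro f _
    rw [mem_ideal_span_monomial_image]
    intro d _
    exact ⟨0, ⟨0, by simp, by simp, by simp⟩, (zero_le : 0 ≤ d)⟩
  | succ s ih =>
    have hJ1 : J ≤ Ideal.span ((fun e => monomial e (1 : K)) ''
        {e | ∃ i : Fin n, (i : ℕ) < m ∧ e = m • Finsupp.single i 1}) := by
      rw [hJ, Ideal.span_le]
      rintro _ ⟨i, hi, rfl⟩
      exact Ideal.subset_span ⟨Finsupp.single i m, ⟨i, hi, by simp⟩, X_pow_eq_monomial.symm⟩
    calc J ^ (s + 1) = J ^ s * J := pow_succ J s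
      _ ≤ _ * _ := Ideal.mul_mono ih hJ1
      _ ≤ Ideal.span ((fun e => monomial e (1 : K)) '' (_ + _)) := span_monomial_mul n _ _
      _ ≤ _ := by
        apply Ideal.span_mono
        apply Set.image_mono
        rintro _ ⟨e1, he1, e2, he2, rfl⟩
        obtain ⟨a, ha, has, rfl⟩ := he1
        obtain ⟨i, hi, rfl⟩ := he2
        refine ⟨a + Finsupp.single i 1, fun j hj => ?_, ?_, by rw [smul_add]⟩
        · rcases Nat.eq_zero_or_pos (a j) with h | h
          · have : j = i := by
              by_contra hne
              simp [Finsupp.add_apply, h, Finsupp.single_eq_of_ne' (Ne.symm hne)] at hj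
            exact this ▸ hi
          · exact ha j (Nat.pos_iff_ne_zero.1 h)
        · rw [sum_add, has, sum_single]

variable {n m} in
lemma mem_pow_of {p : Ideal (MvPolynomial (Fin n) K)}
    (hp : p = Ideal.span ((fun i => (X i : MvPolynomial (Fin n) K)) '' {i | (i : ℕ) < m}))
    (k : ℕ) :
    ∀ c : Fin n →₀ ℕ, (∀ i, c i ≠ 0 → (i : ℕ) < m) → (c.sum fun _ x => x) = k →
      monomial c (1 : K) ∈ p ^ k := by
  induction k with
  | zero =>
    intro c _ hc
    have : c = 0 := by
      ext i
      by_contra h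
      exact h (Finset.sum_eq_zero_iff.1 hc i (Finsupp.mem_support_iff.2 h))
    rw [this, pow_zero, Ideal.one_eq_top]
    trivial
  | succ k ih =>
    intro c hsupp hc
    have hne : c.support.Nonempty := by
      by_contra h
      rw [Finset.not_nonempty_iff_eq_empty] at h
      rw [Finsupp.sum, h] at hc
      simp at hc
    obtain ⟨i, hi⟩ := hne
    have hile : Finsupp.single i 1 ≤ c :=
      Finsupp.single_le_iff.2 (Nat.one_le_iff_ne_zero.2 (Finsupp.mem_support_iff.1 hi))
    set c' : Fin n →₀ ℕ := c - Finsupp.single i 1 with hc'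
    have hcc : c' + Finsupp.single i 1 = c := tsub_add_cancel_of_le hile
    have hsupp' : ∀ j, c' j ≠ 0 → (j : ℕ) < m := by
      intro j hj
      apply hsupp j
      intro h0
      rw [hc', Finsupp.tsub_apply, h0] at hj
      simp at hj
    have hsum' : (c'.sum fun _ x => x) = k := by
      have h1 : ((c' + Finsupp.single i 1).sum fun _ x => x) = k + 1 := by rw [hcc, hc]
      rw [sum_add, sum_single] at h1
      omega
    have hx : (X i : MvPolynomial (Fin n) K) = monomial (Finsupp.single i 1) 1 := by
      rw [← pow_one (X i : MvPolynomial (Fin n) K), X_pow_eq_monomial]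
    have hmono : monomial c (1 : K) = monomial c' 1 * X i := by
      rw [hx, monomial_mul, mul_one, hcc]
    rw [hmono, pow_succ]
    exact Ideal.mul_mem_mul (ih c' hsupp' hsum')
      (hp ▸ Ideal.subset_span ⟨i, hsupp i (Finsupp.mem_support_iff.1 hi), rfl⟩)

variable {n m} in
lemma mem_Jpow {J : Ideal (MvPolynomial (Fin n) K)}
    (hJ : J = Ideal.span ((fun i => (X i : MvPolynomial (Fin n) K) ^ m) '' {i | (i : ℕ) < m}))
    (s : ℕ) :
    ∀ a : Fin n →₀ ℕ, (∀ i, a i ≠ 0 → (i : ℕ) < m) → (a.sum fun _ x => x) = s →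
      monomial (m • a) (1 : K) ∈ J ^ s := by
  induction s with
  | zero =>
    intro a _ ha
    have : a = 0 := by
      ext i
      by_contra h
      exact h (Finset.sum_eq_zero_iff.1 ha i (Finsupp.mem_support_iff.2 h))
    rw [this, smul_zero, pow_zero, Ideal.one_eq_top]
    trivial
  | succ s ih =>
    intro a hsupp ha
    have hne : a.support.Nonempty := by
      by_contra h
      rw [Finset.not_nonempty_iff_eq_empty] at h
      rw [Finsupp.sum, h] at ha
      simp at ha
    obtain ⟨i, hi⟩ := hne
    have hile : Finsupp.single i 1 ≤ a :=
      Finsupp.single_le_iff.2 (Nat.one_le_iff_ne_zero.2 (Finsupp.mem_support_iff.1 hi))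
    set a' : Fin n →₀ ℕ := a - Finsupp.single i 1 with ha'
    have hcc : a' + Finsupp.single i 1 = a := tsub_add_cancel_of_le hile
    have hsupp' : ∀ j, a' j ≠ 0 → (j : ℕ) < m := by
      intro j hj
      apply hsupp j
      intro h0
      rw [ha', Finsupp.tsub_apply, h0] at hj
      simp at hj
    have hsum' : (a'.sum fun _ x => x) = s := by
      have h1 : ((a' + Finsupp.single i 1).sum fun _ x => x) = s + 1 := by rw [hcc, ha]
      rw [sum_add, sum_single] at h1
      omega
    have hmono : monomial (m • a) (1 : K) = monomial (m • a') 1 * X i ^ m := by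
      rw [X_pow_eq_monomial, monomial_mul, mul_one, ← hcc, smul_add,
        Finsupp.smul_single, smul_eq_mul, mul_one]
    rw [hmono, pow_succ]
    exact Ideal.mul_mem_mul (ih a' hsupp' hsum')
      (hJ ▸ Ideal.subset_span ⟨i, hsupp i (Finsupp.mem_support_iff.1 hi), rfl⟩)

lemma exists_le (k : ℕ) (g : Fin n →₀ ℕ) (hk : k ≤ degm n m g) :
    ∃ c : Fin n →₀ ℕ, c ≤ g ∧ (∀ i, c i ≠ 0 → (i : ℕ) < m) ∧ (c.sum fun _ x => x) = k := by
  induction k with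
  | zero => exact ⟨0, (zero_le : 0 ≤ g), by simp, by simp⟩
  | succ k ih =>
    obtain ⟨c, hcg, hcs, hcsum⟩ := ih (le_trans (Nat.le_succ k) hk)
    have hex : ∃ i : Fin n, (i : ℕ) < m ∧ c i < g i := by
      by_contra h
      push_neg at h
      have hle : degm n m g ≤ degm n m c := by
        apply Finset.sum_le_sum
        intro i hif
        exact h i (Finset.mem_filter.1 hif).2
      rw [degm_eq_sum n m hcs, hcsum] at hle
      omega
    obtain ⟨i, him, hic⟩ := hex
    refine ⟨c + Finsupp.single i 1, ?_, ?_, ?_⟩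
    · intro j
      rcases eq_or_ne j i with rfl | hne
      · simpa [Finsupp.add_apply] using hic
      · simpa [Finsupp.add_apply, Finsupp.single_eq_of_ne' (Ne.symm hne)] using hcg j
    · intro j hj
      rcases eq_or_ne j i with rfl | hne
      · exact him
      · apply hcs j
        intro h0
        simp [Finsupp.add_apply, h0, Finsupp.single_eq_of_ne' (Ne.symm hne)] at hj
    · rw [sum_add, hcsum, sum_single]

end Stmt7Aux

open Stmt7Aux

theorem stmt_7 {K : Type*} [Field K] (n m : ℕ) (hm : 1 ≤ m) (hmn : m ≤ n)
    (p J : Ideal (MvPolynomial (Fin n) K))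
    (hp : p = Ideal.span ((fun i => (X i : MvPolynomial (Fin n) K)) '' {i | (i : ℕ) < m}))
    (hJ : J = Ideal.span ((fun i => (X i : MvPolynomial (Fin n) K) ^ m) '' {i | (i : ℕ) < m})) :
    ∀ r s : ℕ, (p ^ m) ^ r * J ^ s = (p ^ m) ^ (r + s) ⊓ J ^ s := by
  intro r s
  have hJp : J ≤ p ^ m := by
    rw [hJ, Ideal.span_le]
    rintro _ ⟨i, hi, rfl⟩
    exact Ideal.pow_mem_pow (hp ▸ Ideal.subset_span ⟨i, hi, rfl⟩) m
  apply le_antisymm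
  · refine le_inf ?_ Ideal.mul_le_right
    calc (p ^ m) ^ r * J ^ s ≤ (p ^ m) ^ r * (p ^ m) ^ s :=
          Ideal.mul_mono_right (Ideal.pow_right_mono hJp s)
      _ = (p ^ m) ^ (r + s) := (pow_add _ r s).symm
  · intro f hf
    obtain ⟨hf1, hf2⟩ := hf
    rw [← pow_mul] at hf1
    have hd1 : ∀ d ∈ f.support, m * (r + s) ≤ degm n m d := by
      intro d hd
      obtain ⟨e, he, hle⟩ :=
        (mem_ideal_span_monomial_image.1 (pow_le_degm hp (m * (r + s)) hf1)) d hd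
      exact le_trans he (degm_mono n m hle)
    have hd2 := mem_ideal_span_monomial_image.1 (Jpow_le hJ s hf2)
    set W : Set (Fin n →₀ ℕ) := {e | ∃ c a : Fin n →₀ ℕ,
      (∀ i, c i ≠ 0 → (i : ℕ) < m) ∧ (c.sum fun _ x => x) = m * r ∧
      (∀ i, a i ≠ 0 → (i : ℕ) < m) ∧ (a.sum fun _ x => x) = s ∧ e = c + m • a} with hW
    have hfW : f ∈ Ideal.span ((fun e => monomial e (1 : K)) '' W) := by
      rw [mem_ideal_span_monomial_image]
      intro d hd
      obtain ⟨_, ⟨a, ha, has, rfl⟩, hmad⟩ := hd2 d hd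
      have hdeg : m * (r + s) ≤ degm n m d := hd1 d hd
      have hma : degm n m (m • a) = m * s := by
        rw [degm_smul, degm_eq_sum n m ha, has]
      have hsplit : degm n m (d - m • a) + degm n m (m • a) = degm n m d := by
        rw [← degm_add, tsub_add_cancel_of_le hmad]
      have hge : m * r ≤ degm n m (d - m • a) := by
        rw [hma] at hsplit
        rw [Nat.mul_add] at hdeg
        omega
      obtain ⟨c, hcle, hcs, hcsum⟩ := exists_le n m (m * r) (d - m • a) hge
      refine ⟨c + m • a, ⟨c, a, hcs, hcsum, ha, has, rfl⟩, ?_⟩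
      calc c + m • a ≤ (d - m • a) + m • a := add_le_add_left hcle _
        _ = d := tsub_add_cancel_of_le hmad
    refine Ideal.span_le.2 ?_ hfW
    rintro _ ⟨e, ⟨c, a, hcs, hcsum, ha, has, rfl⟩, rfl⟩
    show monomial (c + m • a) (1 : K) ∈ (p ^ m) ^ r * J ^ s
    have hmono : monomial (c + m • a) (1 : K) = monomial c 1 * monomial (m • a) 1 := by
      rw [monomial_mul, mul_one]
    rw [hmono]
    exact Ideal.mul_mem_mul (by rw [← pow_mul]; exact mem_pow_of hp (m * r) c hcs hcsum)
      (mem_Jpow hJ s a ha has)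
end

section
/- Let m be a monomial in R = K[x_1, ..., x_n] and I = (m). Let J = (m·u_1, ..., m·u_t) where u_1, ..., u_t are monomials whose supports are disjoint from the support of m. Then for all r, s ≥ 0, I^r J^s = I^(r+s) ∩ J^s. -/
open MvPolynomial Pointwise

private lemma span_mono_mul {K : Type*} [Field K] {n : ℕ} (S T : Set (Fin n →₀ ℕ)) :
    Ideal.span ((fun d => monomial d (1 : K)) '' S) *
      Ideal.span ((fun d => monomial d (1 : K)) '' T) =
      Ideal.span ((fun d => monomial d (1 : K)) '' (S + T)) := by
  rw [Ideal.span_mul_span']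
  congr 1
  ext p
  constructor
  · rintro ⟨x, ⟨d1, hd1, rfl⟩, y, ⟨d2, hd2, rfl⟩, rfl⟩
    exact ⟨d1 + d2, ⟨d1, hd1, d2, hd2, rfl⟩, by simp [monomial_mul]⟩
  · rintro ⟨d, ⟨d1, hd1, d2, hd2, rfl⟩, rfl⟩
    exact ⟨_, ⟨d1, hd1, rfl⟩, _, ⟨d2, hd2, rfl⟩, by simp [monomial_mul]⟩

private lemma pow_span_mono {K : Type*} [Field K] {n : ℕ} (A : Finset (Fin n))
    (S : Set (Fin n →₀ ℕ)) (hS : ∀ w ∈ S, Disjoint w.support A) :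
    ∀ s : ℕ, ∃ W : Set (Fin n →₀ ℕ),
      Ideal.span ((fun d => monomial d (1 : K)) '' S) ^ s =
        Ideal.span ((fun d => monomial d (1 : K)) '' W) ∧
      ∀ w ∈ W, Disjoint w.support A := by
  intro s
  induction s with
  | zero =>
    refine ⟨{0}, ?_, ?_⟩
    · simp [Ideal.span_singleton_one]
    · rintro w rfl; simp
  | succ s ih =>
    obtain ⟨W, hW, hWd⟩ := ih
    refine ⟨W + S, ?_, ?_⟩
    · rw [pow_succ, hW, span_mono_mul]
    · rintro w ⟨w1, hw1, w2, hw2, rfl⟩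
      refine Finset.disjoint_left.2 fun j hj hjA => ?_
      have := Finsupp.support_add hj
      rcases Finset.mem_union.1 this with h | h
      · exact Finset.disjoint_left.1 (hWd _ hw1) h hjA
      · exact Finset.disjoint_left.1 (hS _ hw2) h hjA

theorem stmt_9 {K : Type*} [Field K] (n t : ℕ) (a : Fin n →₀ ℕ) (u : Fin t → (Fin n →₀ ℕ))
    (hdisj : ∀ i, Disjoint (u i).support a.support)
    (I J : Ideal (MvPolynomial (Fin n) K))
    (hI : I = Ideal.span {monomial a (1 : K)})
    (hJ : J = Ideal.span (Set.range fun i => monomial a (1 : K) * monomial (u i) (1 : K))) :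
    ∀ r s : ℕ, I ^ r * J ^ s = I ^ (r + s) ⊓ J ^ s := by
  intro r s
  set f : (Fin n →₀ ℕ) → MvPolynomial (Fin n) K := fun d => monomial d (1 : K) with hf
  -- U
  set U : Ideal (MvPolynomial (Fin n) K) := Ideal.span (f '' Set.range u) with hU
  have hJIU : J = I * U := by
    rw [hJ, hI, hU, Ideal.span_mul_span']
    congr 1
    rw [Set.singleton_mul, ← Set.range_comp, ← Set.range_comp]
    rfl
  -- powers of I as monomial ideals
  have hIpow : ∀ k : ℕ, I ^ k = Ideal.span (f '' {k • a}) := by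
    intro k
    rw [hI, Ideal.span_singleton_pow, Set.image_singleton, hf]
    simp [monomial_pow]
  obtain ⟨W, hW, hWd⟩ := pow_span_mono (K := K) a.support (Set.range u)
    (by rintro w ⟨i, rfl⟩; exact hdisj i) s
  have hJs : J ^ s = Ideal.span (f '' ({s • a} + W)) := by
    rw [hJIU, mul_pow, hIpow s, hW, span_mono_mul]
  have hIJ : I ^ r * J ^ s = Ideal.span (f '' ({(r + s) • a} + W)) := by
    rw [hJIU, mul_pow, ← mul_assoc, ← pow_add, hIpow (r + s), hW, span_mono_mul]
  refine le_antisymm (le_inf ?_ Ideal.mul_le_right) ?_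
  · have hJI : J ≤ I := by
      rw [hJ, hI, Ideal.span_le]
      rintro x ⟨i, rfl⟩
      exact Ideal.mul_mem_right _ _ (Ideal.subset_span rfl)
    have hpow : J ^ s ≤ I ^ s := by
      clear hIJ hJs hW hWd
      induction s with
      | zero => simp
      | succ k ih => rw [pow_succ, pow_succ]; exact Ideal.mul_mono ih hJI
    calc I ^ r * J ^ s ≤ I ^ r * I ^ s := Ideal.mul_mono_right hpow
      _ = I ^ (r + s) := (pow_add I r s).symm
  · rintro x ⟨h1, h2⟩
    rw [SetLike.mem_coe, hIpow (r + s), hf, mem_ideal_span_monomial_image] at h1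
    rw [SetLike.mem_coe, hJs, hf, mem_ideal_span_monomial_image] at h2
    rw [hIJ, hf, mem_ideal_span_monomial_image]
    intro c hc
    obtain ⟨v, hv, hvle⟩ := h2 c hc
    obtain ⟨w, hw, rfl⟩ : ∃ w ∈ W, s • a + w = v := by
      simpa [Set.mem_add] using hv
    obtain ⟨v', hv', h1le⟩ := h1 c hc
    rw [Set.mem_singleton_iff] at hv'
    subst hv'
    refine ⟨(r + s) • a + w, ⟨(r + s) • a, rfl, w, hw, rfl⟩, ?_⟩
    intro j
    by_cases ha : a j = 0
    · have : ((r + s) • a + w) j = w j := by simp [ha]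
      rw [this]
      calc w j ≤ (s • a + w) j := by simp
        _ ≤ c j := hvle j
    · have hwj : w j = 0 := by
        by_contra hwj
        exact Finset.disjoint_left.1 (hWd w hw) (Finsupp.mem_support_iff.2 hwj)
          (Finsupp.mem_support_iff.2 ha)
      have : ((r + s) • a + w) j = ((r + s) • a) j := by simp [hwj]
      rw [this]
      exact h1le j
end

section
/- Let J_1 ⊆ I_1 and J_2 ⊆ I_2 be monomial ideals in R = K[x_1, ..., x_n] with the generators of I_1, J_1 in K[x_1, ..., x_m] and the generators of I_2, J_2 in K[x_{m+1}, ..., x_n]. If J_1 is a demotion of I_1 and J_2 is a demotion of I_2, then J_1 + J_2 is a demotion of I_1 + I_2. -/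
open MvPolynomial

open Pointwise

namespace MonomialAux

variable {σ R : Type*} [CommSemiring R]

/-- span of a set of (coefficient one) monomials. -/
noncomputable def mSpan (R : Type*) [CommSemiring R] {σ : Type*} (S : Set (σ →₀ ℕ)) :
    Ideal (MvPolynomial σ R) :=
  Ideal.span ((fun a => monomial a (1 : R)) '' S)

theorem mem_mSpan {S : Set (σ →₀ ℕ)} {p : MvPolynomial σ R} :
    p ∈ mSpan R S ↔ ∀ m ∈ p.support, ∃ a ∈ S, a ≤ m := by
  classical
  constructor
  · intro hp
    refine Submodule.span_induction (p := fun x _ => ∀ m ∈ x.support, ∃ a ∈ S, a ≤ m)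
      ?_ ?_ ?_ ?_ hp
    · rintro _ ⟨a, haS, rfl⟩ m hm
      rw [support_monomial] at hm
      split_ifs at hm with h1
      · simp at hm
      · exact ⟨a, haS, le_of_eq (Finset.mem_singleton.1 hm).symm⟩
    · intro m hm; simp at hm
    · intro x y _ _ hx hy m hm
      rcases Finset.mem_union.1 (MvPolynomial.support_add hm) with h | h
      exacts [hx m h, hy m h]
    · intro a x _ hx m hm
      rw [smul_eq_mul] at hm
      obtain ⟨m₁, hm₁, m₂, hm₂, rfl⟩ := Finset.mem_add.1 (support_mul a x hm)
      obtain ⟨b, hbS, hb⟩ := hx m₂ hm₂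
      exact ⟨b, hbS, hb.trans le_add_self⟩
  · intro h
    rw [p.as_sum]
    refine Ideal.sum_mem _ fun m hm => ?_
    obtain ⟨a, haS, ha⟩ := h m hm
    have : monomial m (coeff m p) =
        monomial (m - a) (coeff m p) * monomial a 1 := by
      rw [monomial_mul, mul_one, tsub_add_cancel_of_le ha]
    rw [this]
    exact Ideal.mul_mem_left _ _ (Ideal.subset_span ⟨a, haS, rfl⟩)

theorem mSpan_mul (S T : Set (σ →₀ ℕ)) :
    mSpan R S * mSpan R T = mSpan R (S + T) := by
  rw [mSpan, mSpan, Ideal.span_mul_span']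
  congr 1
  rw [← Set.image2_mul, Set.image2_image_left, Set.image2_image_right, ← Set.image2_add,
    Set.image_image2]
  apply Set.image2_congr
  intro a _ b _
  rw [monomial_mul, one_mul]

theorem mSpan_sup (S T : Set (σ →₀ ℕ)) :
    mSpan R S ⊔ mSpan R T = mSpan R (S ∪ T) := by
  rw [mSpan, mSpan, mSpan, Set.image_union, Ideal.span_union]

theorem mSpan_inf (S T : Set (σ →₀ ℕ)) :
    mSpan R S ⊓ mSpan R T = mSpan R (Set.image2 (· ⊔ ·) S T) := by
  ext p
  simp only [Submodule.mem_inf, mem_mSpan, ← forall_and]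
  refine forall₂_congr fun m _ => ?_
  constructor
  · rintro ⟨⟨a, ha, hale⟩, ⟨b, hb, hble⟩⟩
    exact ⟨a ⊔ b, Set.mem_image2_of_mem ha hb, sup_le hale hble⟩
  · rintro ⟨_, ⟨a, ha, b, hb, rfl⟩, hle⟩
    exact ⟨⟨a, ha, le_sup_left.trans hle⟩, ⟨b, hb, le_sup_right.trans hle⟩⟩

/-- n-fold pointwise sumset. -/
def setPow (S : Set (σ →₀ ℕ)) : ℕ → Set (σ →₀ ℕ)
  | 0 => {0}
  | n + 1 => S + setPow S n

theorem mSpan_pow (S : Set (σ →₀ ℕ)) (n : ℕ) :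
    mSpan R S ^ n = mSpan R (setPow S n) := by
  induction n with
  | zero =>
    rw [pow_zero, setPow, mSpan, Set.image_singleton, Ideal.one_eq_top]
    rw [show ((monomial 0 (1 : R)) : MvPolynomial σ R) = 1 from rfl]
    rw [Ideal.span_singleton_one]
  | succ n ih => rw [pow_succ, ih, mul_comm, mSpan_mul, setPow]

theorem mSpan_map_rename {τ : Type*} (f : σ → τ) (S : Set (σ →₀ ℕ)) :
    Ideal.map (rename (R := R) f).toRingHom (mSpan R S)
      = mSpan R (Finsupp.mapDomain f '' S) := by
  rw [mSpan, mSpan, Ideal.map_span, ← Set.image_comp, ← Set.image_comp]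
  congr 1
  ext a
  simp [rename_monomial]

theorem mono_mem_mSpan {S : Set (σ →₀ ℕ)} {a : σ →₀ ℕ} (h : a ∈ S) :
    monomial a (1 : R) ∈ mSpan R S :=
  Ideal.subset_span ⟨a, h, rfl⟩

variable {σ₁ σ₂ : Type*}

theorem sup_add_eq (a c : σ₁ →₀ ℕ) (b d : σ₂ →₀ ℕ) :
    (Finsupp.mapDomain Sum.inl a + Finsupp.mapDomain (Sum.inr : σ₂ → σ₁ ⊕ σ₂) b) ⊔
      (Finsupp.mapDomain Sum.inl c + Finsupp.mapDomain Sum.inr d) =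
    Finsupp.mapDomain Sum.inl (a ⊔ c) + Finsupp.mapDomain Sum.inr (b ⊔ d) := by
  have hr : ∀ (v : σ₂ →₀ ℕ) (y : σ₁),
      Finsupp.mapDomain (Sum.inr : σ₂ → σ₁ ⊕ σ₂) v (Sum.inl y) = 0 := fun v y =>
    Finsupp.mapDomain_notin_range v _ (by simp)
  have hl : ∀ (v : σ₁ →₀ ℕ) (y : σ₂),
      Finsupp.mapDomain (Sum.inl : σ₁ → σ₁ ⊕ σ₂) v (Sum.inr y) = 0 := fun v y =>
    Finsupp.mapDomain_notin_range v _ (by simp)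
  ext x
  cases x with
  | inl y =>
    simp [Finsupp.sup_apply, Finsupp.add_apply,
      Finsupp.mapDomain_apply Sum.inl_injective, hr]
  | inr y =>
    simp [Finsupp.sup_apply, Finsupp.add_apply,
      Finsupp.mapDomain_apply Sum.inr_injective, hl]

theorem setPow_union_subset {S : Set (σ₁ →₀ ℕ)} {T : Set (σ₂ →₀ ℕ)} :
    ∀ n, ∀ w ∈ setPow ((Finsupp.mapDomain (Sum.inl : σ₁ → σ₁ ⊕ σ₂) '' S) ∪
        (Finsupp.mapDomain (Sum.inr : σ₂ → σ₁ ⊕ σ₂) '' T)) n,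
      ∃ p q a b, p + q = n ∧ a ∈ setPow S p ∧ b ∈ setPow T q ∧
        w = Finsupp.mapDomain Sum.inl a + Finsupp.mapDomain Sum.inr b := by
  intro n
  induction n with
  | zero =>
    intro w hw
    rw [setPow, Set.mem_singleton_iff] at hw
    exact ⟨0, 0, 0, 0, rfl, rfl, rfl, by simp [hw, Finsupp.mapDomain_zero]⟩
  | succ n ih =>
    intro w hw
    rw [setPow] at hw
    obtain ⟨u, hu, w', hw', rfl⟩ := Set.mem_add.1 hw
    obtain ⟨p, q, a, b, hpq, ha, hb, rfl⟩ := ih w' hw'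
    rcases hu with ⟨a', ha', rfl⟩ | ⟨b', hb', rfl⟩
    · refine ⟨p + 1, q, a' + a, b, by omega, ?_, hb, ?_⟩
      · rw [setPow]; exact Set.add_mem_add ha' ha
      · rw [Finsupp.mapDomain_add]; abel
    · refine ⟨p, q + 1, a, b' + b, by omega, ha, ?_, ?_⟩
      · rw [setPow]; exact Set.add_mem_add hb' hb
      · rw [Finsupp.mapDomain_add]; abel

theorem mono_mem_of_le {S : Set (σ →₀ ℕ)} {a m : σ →₀ ℕ} (haS : a ∈ S) (h : a ≤ m) :
    monomial m (1 : R) ∈ mSpan R S := by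
  classical
  rw [mem_mSpan]
  intro m' hm'
  rw [support_monomial] at hm'
  split_ifs at hm' with h1
  · simp at hm'
  · exact ⟨a, haS, (Finset.mem_singleton.1 hm') ▸ h⟩

end MonomialAux

open MonomialAux

/-- A monomial ideal: an ideal generated by a set of monomials. -/
def IsMonomialIdeal {σ K : Type*} [CommSemiring K] (I : Ideal (MvPolynomial σ K)) : Prop :=
  ∃ S : Set (σ →₀ ℕ), I = Ideal.span ((fun a => monomial a (1 : K)) '' S)

theorem stmt_11 {K σ₁ σ₂ : Type*} [Field K]
    (I₁ J₁ : Ideal (MvPolynomial σ₁ K)) (I₂ J₂ : Ideal (MvPolynomial σ₂ K))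
    (hI₁ : IsMonomialIdeal I₁) (hJ₁ : IsMonomialIdeal J₁)
    (hI₂ : IsMonomialIdeal I₂) (hJ₂ : IsMonomialIdeal J₂)
    (hJI₁ : J₁ ≤ I₁) (hJI₂ : J₂ ≤ I₂)
    (h₁ : ∀ r s : ℕ, I₁ ^ r * J₁ ^ s = I₁ ^ (r + s) ⊓ J₁ ^ s)
    (h₂ : ∀ r s : ℕ, I₂ ^ r * J₂ ^ s = I₂ ^ (r + s) ⊓ J₂ ^ s) :
    ∀ r s : ℕ,
      (Ideal.map (rename (Sum.inl : σ₁ → σ₁ ⊕ σ₂)).toRingHom I₁ +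
          Ideal.map (rename (Sum.inr : σ₂ → σ₁ ⊕ σ₂)).toRingHom I₂) ^ r *
        (Ideal.map (rename (Sum.inl : σ₁ → σ₁ ⊕ σ₂)).toRingHom J₁ +
          Ideal.map (rename (Sum.inr : σ₂ → σ₁ ⊕ σ₂)).toRingHom J₂) ^ s =
      (Ideal.map (rename (Sum.inl : σ₁ → σ₁ ⊕ σ₂)).toRingHom I₁ +
          Ideal.map (rename (Sum.inr : σ₂ → σ₁ ⊕ σ₂)).toRingHom I₂) ^ (r + s) ⊓
        (Ideal.map (rename (Sum.inl : σ₁ → σ₁ ⊕ σ₂)).toRingHom J₁ +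
          Ideal.map (rename (Sum.inr : σ₂ → σ₁ ⊕ σ₂)).toRingHom J₂) ^ s := by
  intro r s
  obtain ⟨S₁, hS₁⟩ := hI₁
  obtain ⟨T₁, hT₁⟩ := hJ₁
  obtain ⟨S₂, hS₂⟩ := hI₂
  obtain ⟨T₂, hT₂⟩ := hJ₂
  have hS₁ : I₁ = mSpan K S₁ := hS₁
  have hT₁ : J₁ = mSpan K T₁ := hT₁
  have hS₂ : I₂ = mSpan K S₂ := hS₂
  have hT₂ : J₂ = mSpan K T₂ := hT₂
  set f : MvPolynomial σ₁ K →+* MvPolynomial (σ₁ ⊕ σ₂) K := (rename (Sum.inl : σ₁ → σ₁ ⊕ σ₂)).toRingHom with hf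
  set g : MvPolynomial σ₂ K →+* MvPolynomial (σ₁ ⊕ σ₂) K := (rename (Sum.inr : σ₂ → σ₁ ⊕ σ₂)).toRingHom with hg
  set II : Ideal (MvPolynomial (σ₁ ⊕ σ₂) K) := Ideal.map f I₁ + Ideal.map g I₂ with hII
  set JJ : Ideal (MvPolynomial (σ₁ ⊕ σ₂) K) := Ideal.map f J₁ + Ideal.map g J₂ with hJJ
  have hfI₁ : Ideal.map f I₁ ≤ II := by
    rw [hII, Submodule.add_eq_sup]; exact le_sup_left
  have hgI₂ : Ideal.map g I₂ ≤ II := by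
    rw [hII, Submodule.add_eq_sup]; exact le_sup_right
  have hfJ₁ : Ideal.map f J₁ ≤ JJ := by
    rw [hJJ, Submodule.add_eq_sup]; exact le_sup_left
  have hgJ₂ : Ideal.map g J₂ ≤ JJ := by
    rw [hJJ, Submodule.add_eq_sup]; exact le_sup_right
  have hJJII : JJ ≤ II := by
    rw [hII, hJJ, Submodule.add_eq_sup, Submodule.add_eq_sup]
    exact sup_le_sup (Ideal.map_mono hJI₁) (Ideal.map_mono hJI₂)
  refine le_antisymm (le_inf ?_ Ideal.mul_le_right) ?_
  · rw [pow_add]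
    exact Ideal.mul_mono le_rfl (Ideal.pow_right_mono hJJII s)
  -- hard direction
  have hUI : II = mSpan K ((Finsupp.mapDomain (Sum.inl : σ₁ → σ₁ ⊕ σ₂) '' S₁) ∪
      (Finsupp.mapDomain (Sum.inr : σ₂ → σ₁ ⊕ σ₂) '' S₂)) := by
    rw [hII, Submodule.add_eq_sup, hS₁, hS₂, hf, hg, mSpan_map_rename, mSpan_map_rename,
      mSpan_sup]
  have hUJ : JJ = mSpan K ((Finsupp.mapDomain (Sum.inl : σ₁ → σ₁ ⊕ σ₂) '' T₁) ∪
      (Finsupp.mapDomain (Sum.inr : σ₂ → σ₁ ⊕ σ₂) '' T₂)) := by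
    rw [hJJ, Submodule.add_eq_sup, hT₁, hT₂, hf, hg, mSpan_map_rename, mSpan_map_rename,
      mSpan_sup]
  have hcalc : II ^ (r + s) ⊓ JJ ^ s =
      mSpan K (Set.image2 (· ⊔ ·)
        (setPow ((Finsupp.mapDomain (Sum.inl : σ₁ → σ₁ ⊕ σ₂) '' S₁) ∪
          (Finsupp.mapDomain (Sum.inr : σ₂ → σ₁ ⊕ σ₂) '' S₂)) (r + s))
        (setPow ((Finsupp.mapDomain (Sum.inl : σ₁ → σ₁ ⊕ σ₂) '' T₁) ∪
          (Finsupp.mapDomain (Sum.inr : σ₂ → σ₁ ⊕ σ₂) '' T₂)) s)) := by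
    rw [hUI, hUJ, mSpan_pow, mSpan_pow, mSpan_inf]
  rw [hcalc, mSpan, Ideal.span_le]
  rintro x ⟨w', ⟨w, hw, v, hv, rfl⟩, rfl⟩
  obtain ⟨p, q, a, b, hpq, ha, hb, rfl⟩ := setPow_union_subset (r + s) w hw
  obtain ⟨c, d, a', b', hcd, ha', hb', rfl⟩ := setPow_union_subset s v hv
  simp only [SetLike.mem_coe]
  rw [sup_add_eq]
  -- split the monomial into the two rename images
  have hsplit : (monomial (Finsupp.mapDomain (Sum.inl : σ₁ → σ₁ ⊕ σ₂) (a ⊔ a') +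
        Finsupp.mapDomain (Sum.inr : σ₂ → σ₁ ⊕ σ₂) (b ⊔ b')) (1 : K)) =
      f (monomial (a ⊔ a') (1 : K)) * g (monomial (b ⊔ b') (1 : K)) := by
    rw [hf, hg]
    show _ = rename _ _ * rename _ _
    rw [rename_monomial, rename_monomial, monomial_mul, one_mul]
  have key₁ : monomial (a ⊔ a') (1 : K) ∈ I₁ ^ (p - c) * J₁ ^ c := by
    by_cases hc : c ≤ p
    · rw [h₁ (p - c) c, tsub_add_cancel_of_le hc]
      refine Submodule.mem_inf.2 ⟨?_, ?_⟩
      · rw [hS₁, mSpan_pow]; exact mono_mem_of_le ha le_sup_left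
      · rw [hT₁, mSpan_pow]; exact mono_mem_of_le ha' le_sup_right
    · have hpc : p - c = 0 := by omega
      rw [hpc, pow_zero, one_mul, hT₁, mSpan_pow]
      exact mono_mem_of_le ha' le_sup_right
  have key₂ : monomial (b ⊔ b') (1 : K) ∈ I₂ ^ (q - d) * J₂ ^ d := by
    by_cases hd : d ≤ q
    · rw [h₂ (q - d) d, tsub_add_cancel_of_le hd]
      refine Submodule.mem_inf.2 ⟨?_, ?_⟩
      · rw [hS₂, mSpan_pow]; exact mono_mem_of_le hb le_sup_left
      · rw [hT₂, mSpan_pow]; exact mono_mem_of_le hb' le_sup_right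
    · have hqd : q - d = 0 := by omega
      rw [hqd, pow_zero, one_mul, hT₂, mSpan_pow]
      exact mono_mem_of_le hb' le_sup_right
  have m₁ := Ideal.mem_map_of_mem f key₁
  rw [Ideal.map_mul, Ideal.map_pow, Ideal.map_pow] at m₁
  have m₂ := Ideal.mem_map_of_mem g key₂
  rw [Ideal.map_mul, Ideal.map_pow, Ideal.map_pow] at m₂
  have prod := Ideal.mul_mem_mul m₁ m₂
  have hle : (Ideal.map f I₁ ^ (p - c) * Ideal.map f J₁ ^ c) *
      (Ideal.map g I₂ ^ (q - d) * Ideal.map g J₂ ^ d) ≤ II ^ r * JJ ^ s := by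
    calc (Ideal.map f I₁ ^ (p - c) * Ideal.map f J₁ ^ c) *
        (Ideal.map g I₂ ^ (q - d) * Ideal.map g J₂ ^ d)
        ≤ (II ^ (p - c) * JJ ^ c) * (II ^ (q - d) * JJ ^ d) :=
          Ideal.mul_mono
            (Ideal.mul_mono (Ideal.pow_right_mono hfI₁ _) (Ideal.pow_right_mono hfJ₁ _))
            (Ideal.mul_mono (Ideal.pow_right_mono hgI₂ _) (Ideal.pow_right_mono hgJ₂ _))
      _ = II ^ ((p - c) + (q - d)) * JJ ^ (c + d) := by
          rw [mul_mul_mul_comm, pow_add, pow_add]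
      _ ≤ II ^ r * JJ ^ s := by
          have h1 : r ≤ (p - c) + (q - d) := by omega
          have h2 : c + d = s := hcd
          rw [h2]
          exact Ideal.mul_mono (Ideal.pow_le_pow_right h1) le_rfl
  rw [hsplit]
  exact hle prod
end

section
/- Let J_1 ⊆ I_1 and J_2 ⊆ I_2 be monomial ideals in disjoint sets of variables inside R = K[x_1, ..., x_n], and let r, s, c, d ≥ 0 with c + d = s. Then (Σ_{α+β=r+s} I_1^α I_2^β) ∩ (J_1^c J_2^d) = Σ_{a+b=r+s, a≥c, b≥d} (I_1^a ∩ J_1^c)(I_2^b ∩ J_2^d). -/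
open MvPolynomial

section API

open MvPolynomial Pointwise

namespace StmtAux

variable {K : Type*} [Field K] {σ τ σ₁ σ₂ : Type*}

noncomputable def MI (S : Set (σ →₀ ℕ)) : Ideal (MvPolynomial σ K) :=
  Ideal.span ((fun a => monomial a (1 : K)) '' S)

theorem mem_MI {S : Set (σ →₀ ℕ)} {x : MvPolynomial σ K} :
    x ∈ MI (K := K) S ↔ ∀ m ∈ x.support, ∃ s ∈ S, s ≤ m :=
  mem_ideal_span_monomial_image

theorem monomial_mem_MI {S : Set (σ →₀ ℕ)} {a : σ →₀ ℕ} :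
    monomial a (1 : K) ∈ MI (K := K) S ↔ ∃ s ∈ S, s ≤ a := by
  classical
  rw [mem_MI, support_monomial]
  simp [one_ne_zero]

theorem MI_mul (S T : Set (σ →₀ ℕ)) : MI (K := K) S * MI T = MI (S + T) := by
  unfold MI
  rw [Ideal.span_mul_span']
  congr 1
  ext x
  simp only [Set.mem_mul, Set.mem_image, Set.mem_add]
  constructor
  · rintro ⟨-, ⟨a, ha, rfl⟩, -, ⟨b, hb, rfl⟩, rfl⟩
    exact ⟨a + b, ⟨a, ha, b, hb, rfl⟩, by simp [monomial_mul]⟩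
  · rintro ⟨-, ⟨a, ha, b, hb, rfl⟩, rfl⟩
    exact ⟨monomial a 1, ⟨a, ha, rfl⟩, monomial b 1, ⟨b, hb, rfl⟩, by simp [monomial_mul]⟩

theorem MI_pow (S : Set (σ →₀ ℕ)) (n : ℕ) : MI (K := K) S ^ n = MI (n • S) := by
  induction n with
  | zero =>
      rw [pow_zero, zero_nsmul]
      show (1 : Ideal (MvPolynomial σ K)) = Ideal.span _
      rw [show ((0 : Set (σ →₀ ℕ))) = {0} from rfl, Set.image_singleton]
      simp [Ideal.span_singleton_one, Ideal.one_eq_top]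
  | succ n ih => rw [pow_succ, ih, MI_mul, succ_nsmul]

theorem MI_union (S T : Set (σ →₀ ℕ)) : MI (K := K) (S ∪ T) = MI S + MI T := by
  unfold MI
  rw [Set.image_union, Ideal.span_union, Submodule.add_eq_sup]

theorem MI_sum {ι : Type*} (F : Finset ι) (G : ι → Set (σ →₀ ℕ)) :
    ∑ i ∈ F, MI (K := K) (G i) = MI (⋃ i ∈ F, G i) := by
  classical
  induction F using Finset.induction with
  | empty => simp [MI]
  | @insert a s h ih =>
      rw [Finset.sum_insert h, ih, ← MI_union]
      congr 1
      simp [Set.biUnion_insert]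

theorem MI_inf (S T : Set (σ →₀ ℕ)) :
    MI (K := K) S ⊓ MI T = MI (Set.image2 (· ⊔ ·) S T) := by
  ext x
  simp only [Submodule.mem_inf, mem_MI]
  constructor
  · rintro ⟨h1, h2⟩ m hm
    obtain ⟨u, hu, hum⟩ := h1 m hm
    obtain ⟨v, hv, hvm⟩ := h2 m hm
    exact ⟨u ⊔ v, Set.mem_image2_of_mem hu hv, sup_le hum hvm⟩
  · intro h
    constructor <;> intro m hm
    · obtain ⟨g, hg, hgm⟩ := h m hm
      obtain ⟨u, hu, v, hv, rfl⟩ := Set.mem_image2.mp hg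
      exact ⟨u, hu, le_trans le_sup_left hgm⟩
    · obtain ⟨g, hg, hgm⟩ := h m hm
      obtain ⟨u, hu, v, hv, rfl⟩ := Set.mem_image2.mp hg
      exact ⟨v, hv, le_trans le_sup_right hgm⟩

theorem MI_map (f : σ → τ) (S : Set (σ →₀ ℕ)) :
    Ideal.map (rename f).toRingHom (MI (K := K) S) = MI (Finsupp.mapDomain f '' S) := by
  unfold MI
  rw [Ideal.map_span]
  congr 1
  rw [← Set.image_comp, ← Set.image_comp]
  refine Set.image_congr fun a _ => ?_
  simp [rename_monomial]

/-! Finsupp helpers for disjoint variables -/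

theorem inr_apply_inl (v : σ₂ →₀ ℕ) (t : σ₁) :
    Finsupp.mapDomain (Sum.inr : σ₂ → σ₁ ⊕ σ₂) v (Sum.inl t) = 0 :=
  Finsupp.mapDomain_notin_range _ _ (by simp)

theorem inl_apply_inr (u : σ₁ →₀ ℕ) (t : σ₂) :
    Finsupp.mapDomain (Sum.inl : σ₁ → σ₁ ⊕ σ₂) u (Sum.inr t) = 0 :=
  Finsupp.mapDomain_notin_range _ _ (by simp)

noncomputable def res1 (m : (σ₁ ⊕ σ₂) →₀ ℕ) : σ₁ →₀ ℕ :=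
  Finsupp.comapDomain Sum.inl m Sum.inl_injective.injOn

noncomputable def res2 (m : (σ₁ ⊕ σ₂) →₀ ℕ) : σ₂ →₀ ℕ :=
  Finsupp.comapDomain Sum.inr m Sum.inr_injective.injOn

@[simp] theorem res1_apply (m : (σ₁ ⊕ σ₂) →₀ ℕ) (t : σ₁) : res1 m t = m (Sum.inl t) := rfl

@[simp] theorem res2_apply (m : (σ₁ ⊕ σ₂) →₀ ℕ) (t : σ₂) : res2 m t = m (Sum.inr t) := rfl

theorem add_le_iff (u : σ₁ →₀ ℕ) (v : σ₂ →₀ ℕ) (m : (σ₁ ⊕ σ₂) →₀ ℕ) :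
    Finsupp.mapDomain Sum.inl u + Finsupp.mapDomain Sum.inr v ≤ m ↔
      u ≤ res1 m ∧ v ≤ res2 m := by
  simp only [Finsupp.le_def, Finsupp.add_apply]
  constructor
  · intro h
    constructor
    · intro t
      have := h (Sum.inl t)
      rwa [Finsupp.mapDomain_apply Sum.inl_injective, inr_apply_inl, add_zero] at this
    · intro t
      have := h (Sum.inr t)
      rwa [Finsupp.mapDomain_apply Sum.inr_injective, inl_apply_inr, zero_add] at this
  · rintro ⟨h1, h2⟩ x
    cases x with
    | inl t =>
        rw [Finsupp.mapDomain_apply Sum.inl_injective, inr_apply_inl, add_zero]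
        exact h1 t
    | inr t =>
        rw [Finsupp.mapDomain_apply Sum.inr_injective, inl_apply_inr, zero_add]
        exact h2 t

theorem mapDomain_inl_sup (u p : σ₁ →₀ ℕ) :
    Finsupp.mapDomain (Sum.inl : σ₁ → σ₁ ⊕ σ₂) (u ⊔ p) =
      Finsupp.mapDomain Sum.inl u ⊔ Finsupp.mapDomain Sum.inl p := by
  ext x
  cases x with
  | inl t => simp [Finsupp.sup_apply, Finsupp.mapDomain_apply Sum.inl_injective]
  | inr t => simp [Finsupp.sup_apply, inl_apply_inr]

theorem mapDomain_inr_sup (u p : σ₂ →₀ ℕ) :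
    Finsupp.mapDomain (Sum.inr : σ₂ → σ₁ ⊕ σ₂) (u ⊔ p) =
      Finsupp.mapDomain Sum.inr u ⊔ Finsupp.mapDomain Sum.inr p := by
  ext x
  cases x with
  | inl t => simp [Finsupp.sup_apply, inr_apply_inl]
  | inr t => simp [Finsupp.sup_apply, Finsupp.mapDomain_apply Sum.inr_injective]

end StmtAux
end API

open StmtAux Pointwise in
theorem stmt_12 {K σ₁ σ₂ : Type*} [Field K]
    (I₁' J₁' : Ideal (MvPolynomial σ₁ K)) (I₂' J₂' : Ideal (MvPolynomial σ₂ K))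
    (hI₁ : IsMonomialIdeal I₁') (hJ₁ : IsMonomialIdeal J₁')
    (hI₂ : IsMonomialIdeal I₂') (hJ₂ : IsMonomialIdeal J₂')
    (hJI₁ : J₁' ≤ I₁') (hJI₂ : J₂' ≤ I₂')
    (I₁ J₁ I₂ J₂ : Ideal (MvPolynomial (σ₁ ⊕ σ₂) K))
    (hi₁ : I₁ = Ideal.map (rename (Sum.inl : σ₁ → σ₁ ⊕ σ₂)).toRingHom I₁')
    (hj₁ : J₁ = Ideal.map (rename (Sum.inl : σ₁ → σ₁ ⊕ σ₂)).toRingHom J₁')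
    (hi₂ : I₂ = Ideal.map (rename (Sum.inr : σ₂ → σ₁ ⊕ σ₂)).toRingHom I₂')
    (hj₂ : J₂ = Ideal.map (rename (Sum.inr : σ₂ → σ₁ ⊕ σ₂)).toRingHom J₂')
    (r s c d : ℕ) (hcd : c + d = s) :
    (∑ α ∈ Finset.range (r + s + 1), I₁ ^ α * I₂ ^ (r + s - α)) ⊓ (J₁ ^ c * J₂ ^ d) =
      ∑ a ∈ (Finset.range (r + s + 1)).filter (fun a => c ≤ a ∧ d ≤ r + s - a),
        (I₁ ^ a ⊓ J₁ ^ c) * (I₂ ^ (r + s - a) ⊓ J₂ ^ d) := by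
  classical
  obtain ⟨S₁, hS₁⟩ := hI₁
  obtain ⟨T₁, hT₁⟩ := hJ₁
  obtain ⟨S₂, hS₂⟩ := hI₂
  obtain ⟨T₂, hT₂⟩ := hJ₂
  have hS₁' : I₁' = MI S₁ := hS₁
  have hT₁' : J₁' = MI T₁ := hT₁
  have hS₂' : I₂' = MI S₂ := hS₂
  have hT₂' : J₂' = MI T₂ := hT₂
  set N := r + s with hN
  -- power identities
  have pI₁ : ∀ a : ℕ, I₁ ^ a = MI (Finsupp.mapDomain Sum.inl '' (a • S₁)) := fun a => by
    rw [hi₁, hS₁', ← Ideal.map_pow, MI_pow, MI_map]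
  have pJ₁ : ∀ a : ℕ, J₁ ^ a = MI (Finsupp.mapDomain Sum.inl '' (a • T₁)) := fun a => by
    rw [hj₁, hT₁', ← Ideal.map_pow, MI_pow, MI_map]
  have pI₂ : ∀ a : ℕ, I₂ ^ a = MI (Finsupp.mapDomain Sum.inr '' (a • S₂)) := fun a => by
    rw [hi₂, hS₂', ← Ideal.map_pow, MI_pow, MI_map]
  have pJ₂ : ∀ a : ℕ, J₂ ^ a = MI (Finsupp.mapDomain Sum.inr '' (a • T₂)) := fun a => by
    rw [hj₂, hT₂', ← Ideal.map_pow, MI_pow, MI_map]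
  -- abbreviations for generator sets
  set UL : Set ((σ₁ ⊕ σ₂) →₀ ℕ) :=
    ⋃ α ∈ Finset.range (N + 1),
      (Finsupp.mapDomain Sum.inl '' (α • S₁) + Finsupp.mapDomain Sum.inr '' ((N - α) • S₂))
    with hUL
  set UJ : Set ((σ₁ ⊕ σ₂) →₀ ℕ) :=
    Finsupp.mapDomain Sum.inl '' (c • T₁) + Finsupp.mapDomain Sum.inr '' (d • T₂) with hUJ
  set UR : Set ((σ₁ ⊕ σ₂) →₀ ℕ) :=
    ⋃ a ∈ (Finset.range (N + 1)).filter (fun a => c ≤ a ∧ d ≤ N - a),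
      (Set.image2 (· ⊔ ·) (Finsupp.mapDomain Sum.inl '' (a • S₁))
          (Finsupp.mapDomain Sum.inl '' (c • T₁)) +
        Set.image2 (· ⊔ ·) (Finsupp.mapDomain Sum.inr '' ((N - a) • S₂))
          (Finsupp.mapDomain Sum.inr '' (d • T₂))) with hUR
  have hL1 : (∑ α ∈ Finset.range (N + 1), I₁ ^ α * I₂ ^ (N - α)) = MI UL := by
    rw [hUL, ← MI_sum]
    exact Finset.sum_congr rfl fun α _ => by rw [pI₁, pI₂, MI_mul]
  have hL2 : J₁ ^ c * J₂ ^ d = MI UJ := by rw [hUJ, pJ₁, pJ₂, MI_mul]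
  have hR : (∑ a ∈ (Finset.range (N + 1)).filter (fun a => c ≤ a ∧ d ≤ N - a),
      (I₁ ^ a ⊓ J₁ ^ c) * (I₂ ^ (N - a) ⊓ J₂ ^ d)) = MI UR := by
    rw [hUR, ← MI_sum]
    exact Finset.sum_congr rfl fun a _ => by
      rw [pI₁, pI₂, pJ₁, pJ₂, MI_inf, MI_inf, MI_mul]
  rw [hL1, hL2, hR]
  -- membership translations for powers, per monomial
  have mA : ∀ (w : σ₁ →₀ ℕ) (a : ℕ), (∃ u ∈ a • S₁, u ≤ w) ↔ monomial w (1 : K) ∈ I₁' ^ a :=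
    fun w a => by rw [hS₁', MI_pow, monomial_mem_MI]
  have mP : ∀ (w : σ₁ →₀ ℕ) (a : ℕ), (∃ u ∈ a • T₁, u ≤ w) ↔ monomial w (1 : K) ∈ J₁' ^ a :=
    fun w a => by rw [hT₁', MI_pow, monomial_mem_MI]
  have mB : ∀ (w : σ₂ →₀ ℕ) (a : ℕ), (∃ u ∈ a • S₂, u ≤ w) ↔ monomial w (1 : K) ∈ I₂' ^ a :=
    fun w a => by rw [hS₂', MI_pow, monomial_mem_MI]
  have mQ : ∀ (w : σ₂ →₀ ℕ) (a : ℕ), (∃ u ∈ a • T₂, u ≤ w) ↔ monomial w (1 : K) ∈ J₂' ^ a :=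
    fun w a => by rw [hT₂', MI_pow, monomial_mem_MI]
  have key : ∀ m : (σ₁ ⊕ σ₂) →₀ ℕ,
      ((∃ g ∈ UL, g ≤ m) ∧ (∃ g ∈ UJ, g ≤ m)) ↔ (∃ g ∈ UR, g ≤ m) := by
    intro m
    have build : ∀ a : ℕ, a ≤ N → c ≤ a → d ≤ N - a →
        monomial (res1 m) (1 : K) ∈ I₁' ^ a → monomial (res1 m) (1 : K) ∈ J₁' ^ c →
        monomial (res2 m) (1 : K) ∈ I₂' ^ (N - a) → monomial (res2 m) (1 : K) ∈ J₂' ^ d →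
        ∃ g ∈ UR, g ≤ m := by
      intro a haN hca hda hA hP hB hQ
      obtain ⟨u, hu, hum⟩ := (mA _ a).mpr hA
      obtain ⟨p, hp, hpm⟩ := (mP _ c).mpr hP
      obtain ⟨v, hv, hvm⟩ := (mB _ (N - a)).mpr hB
      obtain ⟨q, hq, hqm⟩ := (mQ _ d).mpr hQ
      refine ⟨(Finsupp.mapDomain Sum.inl u ⊔ Finsupp.mapDomain Sum.inl p) +
          (Finsupp.mapDomain Sum.inr v ⊔ Finsupp.mapDomain Sum.inr q), ?_, ?_⟩
      · rw [hUR]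
        simp only [Set.mem_iUnion]
        refine ⟨a, ?_, Set.add_mem_add
          (Set.mem_image2_of_mem (Set.mem_image_of_mem _ hu) (Set.mem_image_of_mem _ hp))
          (Set.mem_image2_of_mem (Set.mem_image_of_mem _ hv) (Set.mem_image_of_mem _ hq))⟩
        simp only [Finset.mem_filter, Finset.mem_range]
        exact ⟨by omega, hca, hda⟩
      · rw [← mapDomain_inl_sup, ← mapDomain_inr_sup, add_le_iff]
        exact ⟨sup_le hum hpm, sup_le hvm hqm⟩
    constructor
    · rintro ⟨⟨g, hg, hgm⟩, ⟨h, hh, hhm⟩⟩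
      rw [hUL] at hg
      simp only [Set.mem_iUnion, Finset.mem_range] at hg
      obtain ⟨α, hα, hgmem⟩ := hg
      obtain ⟨g₁, hg₁, g₂, hg₂, rfl⟩ := Set.mem_add.mp hgmem
      obtain ⟨u, hu, rfl⟩ := hg₁
      obtain ⟨v, hv, rfl⟩ := hg₂
      obtain ⟨hum, hvm⟩ := (add_le_iff u v m).mp hgm
      rw [hUJ] at hh
      obtain ⟨h₁, hh₁, h₂, hh₂, rfl⟩ := Set.mem_add.mp hh
      obtain ⟨p, hp, rfl⟩ := hh₁
      obtain ⟨q, hq, rfl⟩ := hh₂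
      obtain ⟨hpm, hqm⟩ := (add_le_iff p q m).mp hhm
      have hA : monomial (res1 m) (1 : K) ∈ I₁' ^ α := (mA _ α).mp ⟨u, hu, hum⟩
      have hB : monomial (res2 m) (1 : K) ∈ I₂' ^ (N - α) := (mB _ _).mp ⟨v, hv, hvm⟩
      have hP : monomial (res1 m) (1 : K) ∈ J₁' ^ c := (mP _ c).mp ⟨p, hp, hpm⟩
      have hQ : monomial (res2 m) (1 : K) ∈ J₂' ^ d := (mQ _ d).mp ⟨q, hq, hqm⟩
      have hαN : α ≤ N := by omega
      rcases le_or_gt c α with hcα | hcα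
      · rcases le_or_gt d (N - α) with hdα | hdα
        · exact build α hαN hcα hdα hA hP hB hQ
        · refine build (N - d) (by omega) (by omega) (by omega)
            (Ideal.pow_le_pow_right (by omega) hA) hP
            (by
              rw [show N - (N - d) = d by omega]
              exact Ideal.pow_right_mono hJI₂ d hQ) hQ
      · refine build c (by omega) le_rfl (by omega)
          (Ideal.pow_right_mono hJI₁ c hP) hP
          (Ideal.pow_le_pow_right (by omega) hB) hQ
    · rintro ⟨g, hg, hgm⟩
      rw [hUR] at hg
      simp only [Set.mem_iUnion, Finset.mem_filter, Finset.mem_range] at hg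
      obtain ⟨a, ⟨haN, hca, hda⟩, hgmem⟩ := hg
      obtain ⟨g₁, hg₁, g₂, hg₂, rfl⟩ := Set.mem_add.mp hgmem
      obtain ⟨u', hu', p', hp', rfl⟩ := Set.mem_image2.mp hg₁
      obtain ⟨v', hv', q', hq', rfl⟩ := Set.mem_image2.mp hg₂
      obtain ⟨u, hu, rfl⟩ := hu'
      obtain ⟨p, hp, rfl⟩ := hp'
      obtain ⟨v, hv, rfl⟩ := hv'
      obtain ⟨q, hq, rfl⟩ := hq'
      rw [← mapDomain_inl_sup, ← mapDomain_inr_sup, StmtAux.add_le_iff] at hgm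
      obtain ⟨h1, h2⟩ := hgm
      have hum : u ≤ res1 m := le_trans le_sup_left h1
      have hpm : p ≤ res1 m := le_trans le_sup_right h1
      have hvm : v ≤ res2 m := le_trans le_sup_left h2
      have hqm : q ≤ res2 m := le_trans le_sup_right h2
      constructor
      · refine ⟨Finsupp.mapDomain Sum.inl u + Finsupp.mapDomain Sum.inr v, ?_, ?_⟩
        · rw [hUL]
          simp only [Set.mem_iUnion, Finset.mem_range]
          exact ⟨a, by omega, Set.add_mem_add (Set.mem_image_of_mem _ hu)
            (Set.mem_image_of_mem _ hv)⟩
        · exact (add_le_iff u v m).mpr ⟨hum, hvm⟩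
      · refine ⟨Finsupp.mapDomain Sum.inl p + Finsupp.mapDomain Sum.inr q, ?_, ?_⟩
        · rw [hUJ]
          exact Set.add_mem_add (Set.mem_image_of_mem _ hp) (Set.mem_image_of_mem _ hq)
        · exact (add_le_iff p q m).mpr ⟨hpm, hqm⟩
  ext x
  simp only [Submodule.mem_inf, mem_MI]
  constructor
  · rintro ⟨h1, h2⟩ m hm
    exact (key m).mp ⟨h1 m hm, h2 m hm⟩
  · intro h
    exact ⟨fun m hm => ((key m).mpr (h m hm)).1, fun m hm => ((key m).mpr (h m hm)).2⟩
end

section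
/- Let J ⊆ I be monomial ideals in R = K[x_1, ..., x_n] and let h be a monomial whose support is disjoint from supp(I) ∪ supp(J). Then J is a demotion of I if and only if h·J is a demotion of h·I. -/
open MvPolynomial

/-- Cancellation of a monomial factor whose support is disjoint from the generators. -/
lemma aux_cancel_15 {K : Type*} [Field K] {n : ℕ} (S : Set (Fin n →₀ ℕ)) (b : Fin n →₀ ℕ)
    (hd : ∀ a ∈ S, ∀ i ∈ a.support, i ∉ b.support) (g : MvPolynomial (Fin n) K)
    (h : monomial b (1 : K) * g ∈ Ideal.span ((fun a => monomial a (1 : K)) '' S)) :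
    g ∈ Ideal.span ((fun a => monomial a (1 : K)) '' S) := by
  rw [mem_ideal_span_monomial_image] at h ⊢
  intro μ hμ
  have hco : (monomial b (1 : K) * g).coeff (b + μ) = g.coeff μ := by
    simpa using coeff_monomial_mul μ b (1 : K) g
  have hmem : b + μ ∈ (monomial b (1 : K) * g).support := by
    rw [mem_support_iff, hco]
    exact mem_support_iff.1 hμ
  obtain ⟨si, hsi, hle⟩ := h _ hmem
  refine ⟨si, hsi, Finsupp.le_def.2 fun i => ?_⟩
  by_cases hb : i ∈ b.support
  · have : si i = 0 := by
      by_contra hne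
      exact hd si hsi i (Finsupp.mem_support_iff.2 hne) hb
    simp [this]
  · have hb0 : b i = 0 := Finsupp.notMem_support_iff.1 hb
    have := Finsupp.le_def.1 hle i
    simpa [hb0] using this

/-- A power of a monomial ideal is a monomial ideal whose generators involve only
variables already appearing in the original generators. -/
lemma aux_pow_15 {K : Type*} [Field K] {n : ℕ} (S : Set (Fin n →₀ ℕ)) (P : Fin n → Prop)
    (hS : ∀ a ∈ S, ∀ i ∈ a.support, P i) (s : ℕ) :
    ∃ T : Set (Fin n →₀ ℕ), (∀ b ∈ T, ∀ i ∈ b.support, P i) ∧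
      (Ideal.span ((fun a => monomial a (1 : K)) '' S)) ^ s =
        Ideal.span ((fun a => monomial a (1 : K)) '' T) := by
  induction s with
  | zero =>
    refine ⟨{0}, ?_, ?_⟩
    · rintro b rfl i hi
      simp at hi
    · simp [Ideal.span_singleton_one]
  | succ s ih =>
    obtain ⟨T, hT, hTeq⟩ := ih
    refine ⟨Set.image2 (· + ·) T S, ?_, ?_⟩
    · rintro b ⟨t, ht, a, ha, rfl⟩ i hi
      have := Finsupp.support_add hi
      rcases Finset.mem_union.1 this with h | h
      · exact hT t ht i h
      · exact hS a ha i h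
    · rw [pow_succ, hTeq, Ideal.span_mul_span']
      congr 1
      ext x
      constructor
      · rintro ⟨_, ⟨t, ht, rfl⟩, _, ⟨a, ha, rfl⟩, rfl⟩
        exact ⟨t + a, ⟨t, ht, a, ha, rfl⟩, by simp [monomial_mul]⟩
      · rintro ⟨_, ⟨t, ht, a, ha, rfl⟩, rfl⟩
        exact ⟨monomial t 1, ⟨t, ht, rfl⟩, monomial a 1, ⟨a, ha, rfl⟩,
          by simp [monomial_mul]⟩

theorem stmt_15 {K : Type*} [Field K] (n : ℕ)
    (S₁ S₂ : Set (Fin n →₀ ℕ)) (I J : Ideal (MvPolynomial (Fin n) K))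
    (hI : I = Ideal.span ((fun a => monomial a (1 : K)) '' S₁))
    (hJ : J = Ideal.span ((fun a => monomial a (1 : K)) '' S₂))
    (hJI : J ≤ I)
    (ha : Fin n →₀ ℕ)
    (hdisj : Disjoint ((ha.support : Set (Fin n)))
      ((⋃ a ∈ S₁, (a.support : Set (Fin n))) ∪ ⋃ a ∈ S₂, (a.support : Set (Fin n)))) :
    (∀ r s : ℕ, I ^ r * J ^ s = I ^ (r + s) ⊓ J ^ s) ↔
      (∀ r s : ℕ,
        (Ideal.span {monomial ha (1 : K)} * I) ^ r *
          (Ideal.span {monomial ha (1 : K)} * J) ^ s =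
        (Ideal.span {monomial ha (1 : K)} * I) ^ (r + s) ⊓
          (Ideal.span {monomial ha (1 : K)} * J) ^ s) := by
  set m : MvPolynomial (Fin n) K := monomial ha (1 : K) with hm_def
  have hm : m ≠ 0 := by
    simp [hm_def, monomial_eq_zero]
  -- disjointness for S₂
  have hd₂ : ∀ a ∈ S₂, ∀ i ∈ a.support, i ∉ ha.support := by
    intro a haS i hi hina
    have : (i : Fin n) ∉ ((⋃ a ∈ S₁, (a.support : Set (Fin n))) ∪
        ⋃ a ∈ S₂, (a.support : Set (Fin n))) := Set.disjoint_left.1 hdisj (by exact hina)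
    exact this (Or.inr (Set.mem_biUnion haS hi))
  -- membership in span{m}^k * M
  have memP : ∀ (k : ℕ) (M : Ideal (MvPolynomial (Fin n) K)) (x : MvPolynomial (Fin n) K),
      x ∈ Ideal.span {m} ^ k * M ↔ ∃ y ∈ M, m ^ k * y = x := by
    intro k M x
    rw [Ideal.span_singleton_pow, Ideal.mem_span_singleton_mul]
  -- cancellation of m^k in J^s membership
  have key : ∀ (k s : ℕ) (g : MvPolynomial (Fin n) K), m ^ k * g ∈ J ^ s → g ∈ J ^ s := by
    intro k s g hg
    obtain ⟨T, hT, hTeq⟩ := aux_pow_15 (K := K) S₂ (fun i => i ∉ ha.support) hd₂ s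
    rw [hJ, hTeq] at hg ⊢
    have hmk : m ^ k = monomial (k • ha) (1 : K) := by
      rw [hm_def, monomial_pow, one_pow]
    rw [hmk] at hg
    refine aux_cancel_15 T (k • ha) ?_ g hg
    intro a haT i hi hik
    exact hT a haT i hi (Finsupp.support_smul hik)
  constructor
  · -- forward
    intro H r s
    rw [mul_pow, mul_pow, mul_pow, mul_mul_mul_comm, ← pow_add, H r s]
    apply le_antisymm
    · intro x hx
      obtain ⟨g, hg, rfl⟩ := (memP (r + s) _ x).1 hx
      refine Ideal.mem_inf.2 ⟨?_, ?_⟩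
      · exact (memP (r + s) _ _).2 ⟨g, hg.1, rfl⟩
      · refine (memP s _ _).2 ⟨m ^ r * g, Ideal.mul_mem_left _ _ hg.2, ?_⟩
        rw [← mul_assoc, ← pow_add, add_comm s r]
    · intro x hx
      obtain ⟨hx1, hx2⟩ := Ideal.mem_inf.1 hx
      obtain ⟨g, hg, hgx⟩ := (memP (r + s) _ x).1 hx1
      obtain ⟨g', hg', hg'x⟩ := (memP s _ x).1 hx2
      have hcan : m ^ s * (m ^ r * g) = m ^ s * g' := by
        rw [← mul_assoc, ← pow_add, add_comm s r, hgx, hg'x]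
      have : m ^ r * g = g' := mul_left_cancel₀ (pow_ne_zero _ hm) hcan
      have hgJ : g ∈ J ^ s := key r s g (this ▸ hg')
      exact (memP (r + s) _ x).2 ⟨g, Ideal.mem_inf.2 ⟨hg, hgJ⟩, hgx⟩
  · -- reverse
    intro H r s
    apply le_antisymm
    · refine le_inf ?_ Ideal.mul_le_right
      calc I ^ r * J ^ s ≤ I ^ r * I ^ s := Ideal.mul_mono_right (pow_le_pow_left' hJI s)
        _ = I ^ (r + s) := (pow_add I r s).symm
    · intro x hx
      obtain ⟨hx1, hx2⟩ := Ideal.mem_inf.1 hx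
      have H' := H r s
      rw [mul_pow, mul_pow, mul_pow, mul_mul_mul_comm, ← pow_add] at H'
      have hmem : m ^ (r + s) * x ∈ Ideal.span {m} ^ (r + s) * (I ^ r * J ^ s) := by
        rw [H']
        refine Ideal.mem_inf.2 ⟨(memP (r + s) _ _).2 ⟨x, hx1, rfl⟩, ?_⟩
        refine (memP s _ _).2 ⟨m ^ r * x, Ideal.mul_mem_left _ _ hx2, ?_⟩
        rw [← mul_assoc, ← pow_add, add_comm s r]
      obtain ⟨y, hy, hyx⟩ := (memP (r + s) _ _).1 hmem
      have : y = x := mul_left_cancel₀ (pow_ne_zero _ hm) hyx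
      exact this ▸ hy
end

section
/- Let q_1, ..., q_r be primary monomial ideals in K[x_1, ..., x_n] with pairwise non-comparable radicals and I = q_1 ∩ ... ∩ q_r. Then the n-th symbolic power satisfies I^(n) = q_1^n ∩ ... ∩ q_r^n for all n ≥ 1. -/
open MvPolynomial

/-- The `k`-th symbolic power of `I`: the intersection, over the minimal primes `p` of `I`,
of the contractions of the localizations of `I ^ k` at `p`. -/
noncomputable def symbolicPower {R : Type*} [CommRing R] (I : Ideal R) (k : ℕ) : Ideal R :=
  sInf { L : Ideal R | ∃ (p : Ideal R) (hp : p ∈ I.minimalPrimes),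
    L = Ideal.comap (algebraMap R (Localization (@Ideal.primeCompl R _ p hp.1.1)))
      (Ideal.map (algebraMap R (Localization (@Ideal.primeCompl R _ p hp.1.1))) (I ^ k)) }

lemma mem_comap_map_loc {R : Type*} [CommRing R] (M : Submonoid R) (J : Ideal R) (z : R) :
    z ∈ (J.map (algebraMap R (Localization M))).comap (algebraMap R (Localization M)) ↔
      ∃ m ∈ M, m * z ∈ J := by
  constructor
  · intro h
    rw [Ideal.mem_comap, IsLocalization.mem_map_algebraMap_iff M] at h
    obtain ⟨⟨a, m⟩, h⟩ := h
    rw [← map_mul, IsLocalization.eq_iff_exists M] at h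
    obtain ⟨c, hc⟩ := h
    refine ⟨c * m, (c * m).2, ?_⟩
    have h2 : (↑(c * m) : R) * z = ↑c * (↑a : R) := by
      push_cast
      calc (c:R) * m * z = ↑c * (z * ↑m) := by ring
      _ = ↑c * ↑a := hc
    rw [Submonoid.coe_mul] at h2
    rw [h2]
    exact J.mul_mem_left _ a.2
  · rintro ⟨m, hm, hmz⟩
    rw [Ideal.mem_comap]
    have h1 : algebraMap R (Localization M) (m * z) ∈ J.map (algebraMap R (Localization M)) :=
      Ideal.mem_map_of_mem _ hmz
    rw [map_mul] at h1
    have hu : IsUnit (algebraMap R (Localization M) m) :=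
      IsLocalization.map_units _ (⟨m, hm⟩ : M)
    have := (J.map (algebraMap R (Localization M))).mul_mem_left (↑hu.unit⁻¹) h1
    rwa [← mul_assoc, IsUnit.val_inv_mul, one_mul] at this

lemma key_cl {K : Type*} [Field K] {n : ℕ} {S : Set (Fin n →₀ ℕ)} {A : Set (Fin n)}
    (hS : ∀ a ∈ S, ∀ j, j ∉ A → a j = 0)
    {s f : MvPolynomial (Fin n) K}
    (hs : ∃ β ∈ s.support, ∀ j ∈ A, β j = 0)
    (h : s * f ∈ Ideal.span ((fun a => monomial a (1 : K)) '' S)) :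
    f ∈ Ideal.span ((fun a => monomial a (1 : K)) '' S) := by
  classical
  by_contra hbad
  rw [mem_ideal_span_monomial_image] at hbad
  push_neg at hbad
  obtain ⟨b0, hb0f, hb0bad⟩ := hbad
  set T : Finset (Fin n →₀ ℕ) := f.support.filter (fun b => ∃ a ∈ S, a ≤ b) with hT
  set g' : MvPolynomial (Fin n) K := ∑ b ∈ T, monomial b (coeff b f) with hg'
  have hg'mem : g' ∈ Ideal.span ((fun a => monomial a (1 : K)) '' S) := by
    refine Ideal.sum_mem _ fun b hb => ?_
    rw [mem_ideal_span_monomial_image]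
    intro xi hxi
    rw [support_monomial] at hxi
    split_ifs at hxi
    · exact absurd hxi (Finset.notMem_empty xi)
    · rw [Finset.mem_singleton] at hxi
      subst hxi
      exact (Finset.mem_filter.mp hb).2
  set g : MvPolynomial (Fin n) K := f - g' with hgdef
  have hcoeffg : ∀ b, coeff b g = coeff b f - (if b ∈ T then coeff b f else 0) := by
    intro b
    rw [hgdef, coeff_sub, hg', coeff_sum]
    congr 1
    simp_rw [coeff_monomial]
    exact Finset.sum_ite_eq' T b (fun b' => coeff b' f)
  have hgbad : ∀ b ∈ g.support, ¬ ∃ a ∈ S, a ≤ b := by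
    intro b hb hgood
    have hb' : coeff b g ≠ 0 := mem_support_iff.mp hb
    rw [hcoeffg b] at hb'
    by_cases hbf : b ∈ f.support
    · have : b ∈ T := Finset.mem_filter.mpr ⟨hbf, hgood⟩
      rw [if_pos this, sub_self] at hb'
      exact hb' rfl
    · have h1 : coeff b f = 0 := notMem_support_iff.mp hbf
      have h2 : b ∉ T := fun hc => hbf (Finset.mem_filter.mp hc).1
      rw [if_neg h2, h1, sub_zero] at hb'
      exact hb' rfl
  have hgeq : ∀ b, (¬ ∃ a ∈ S, a ≤ b) → coeff b g = coeff b f := by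
    intro b hb
    have : b ∉ T := fun hc => hb (Finset.mem_filter.mp hc).2
    rw [hcoeffg b, if_neg this, sub_zero]
  have hgne : g ≠ 0 := by
    intro h0
    have := hgeq b0 (by push_neg; exact hb0bad)
    rw [h0] at this
    exact mem_support_iff.mp hb0f (by simpa using this.symm)
  have hsg : s * g ∈ Ideal.span ((fun a => monomial a (1 : K)) '' S) := by
    rw [hgdef, mul_sub]
    exact Ideal.sub_mem _ h (Ideal.mul_mem_left _ _ hg'mem)
  set w : (Fin n →₀ ℕ) → Lex (Fin n →₀ ℕ) ×ₗ Lex (Fin n →₀ ℕ) :=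
    fun c => toLex (toLex (c.filter (· ∈ A)), toLex c) with hw
  obtain ⟨bm, hbm, hbmmin⟩ :=
    g.support.exists_min_image w (Finset.nonempty_iff_ne_empty.mpr (mt MvPolynomial.support_eq_empty.mp hgne))
  set sA : Finset (Fin n →₀ ℕ) := s.support.filter (fun β => ∀ j ∈ A, β j = 0) with hsA
  have hsAne : sA.Nonempty := by
    obtain ⟨β0, hβ0, hβ0A⟩ := hs
    exact ⟨β0, Finset.mem_filter.mpr ⟨hβ0, hβ0A⟩⟩
  obtain ⟨βm, hβm, hβmmin⟩ := sA.exists_min_image (fun β => toLex β) hsAne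
  have hβmA : ∀ j ∈ A, βm j = 0 := (Finset.mem_filter.mp hβm).2
  set c : Fin n →₀ ℕ := βm + bm with hc
  have hcA : ∀ j ∈ A, c j = bm j := by
    intro j hj
    rw [hc, Finsupp.add_apply, hβmA j hj, zero_add]
  have hone : ∀ p ∈ Finset.HasAntidiagonal.antidiagonal c, p ≠ (βm, bm) → coeff p.1 s * coeff p.2 g = 0 := by
    rintro ⟨β, b⟩ hmem hne
    by_contra hnz
    have hβ : coeff β s ≠ 0 := fun h0 => hnz (by simp [h0])
    have hb : coeff b g ≠ 0 := fun h0 => hnz (by simp [h0])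
    have hsum : β + b = c := Finset.HasAntidiagonal.mem_antidiagonal.mp hmem
    have hbsup : b ∈ g.support := mem_support_iff.mpr hb
    have hwb : w bm ≤ w b := hbmmin b hbsup
    have happ : ∀ j, β j + b j = c j := by
      intro j
      have := DFunLike.congr_fun hsum j
      simpa using this
    have hfle : b.filter (· ∈ A) ≤ bm.filter (· ∈ A) := by
      rw [Finsupp.le_def]
      intro j
      rw [Finsupp.filter_apply, Finsupp.filter_apply]
      split_ifs with hj
      · have := happ j
        rw [hcA j hj] at this
        omega
      · exact le_refl 0
    have hwb' := Prod.Lex.le_iff.mp hwb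
    have hnotlt : ¬ toLex (bm.filter (· ∈ A)) < toLex (b.filter (· ∈ A)) :=
      not_lt.mpr (Finsupp.toLex_monotone hfle)
    rcases hwb' with hlt | ⟨heq1, hle2⟩
    · exact hnotlt hlt
    have hfeq : bm.filter (· ∈ A) = b.filter (· ∈ A) := toLex.injective heq1
    have hbbm : ∀ j ∈ A, b j = bm j := by
      intro j hj
      have := DFunLike.congr_fun hfeq j
      rwa [Finsupp.filter_apply_pos _ _ hj, Finsupp.filter_apply_pos _ _ hj, eq_comm] at this
    have hβA : ∀ j ∈ A, β j = 0 := by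
      intro j hj
      have := happ j
      rw [hcA j hj, hbbm j hj] at this
      omega
    have hβsA : β ∈ sA := Finset.mem_filter.mpr ⟨mem_support_iff.mpr hβ, hβA⟩
    have hβmle : toLex βm ≤ toLex β := hβmmin β hβsA
    have haddeq : toLex βm + toLex bm = toLex β + toLex b := by
      rw [← toLex_add, ← toLex_add, hsum]
    have hβeq : toLex βm = toLex β := by
      by_contra hne2
      have hlt : toLex βm < toLex β := lt_of_le_of_ne hβmle hne2
      have : toLex βm + toLex bm < toLex β + toLex b := add_lt_add_of_lt_of_le hlt hle2
      rw [haddeq] at this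
      exact lt_irrefl _ this
    have hbeq : toLex bm = toLex b := by
      rw [hβeq] at haddeq
      exact add_left_cancel haddeq
    exact hne (Prod.ext (toLex.injective hβeq.symm) (toLex.injective hbeq.symm))
  have hcoeffc : coeff c (s * g) = coeff βm s * coeff bm g := by
    rw [coeff_mul]
    exact Finset.sum_eq_single_of_mem (βm, bm) (Finset.HasAntidiagonal.mem_antidiagonal.mpr rfl) hone
  have hcne : coeff c (s * g) ≠ 0 := by
    rw [hcoeffc]
    exact mul_ne_zero (mem_support_iff.mp (Finset.mem_filter.mp hβm).1)
      (mem_support_iff.mp hbm)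
  obtain ⟨a, haS, hac⟩ :=
    (mem_ideal_span_monomial_image.mp hsg) c (mem_support_iff.mpr hcne)
  refine hgbad bm hbm ⟨a, haS, ?_⟩
  rw [Finsupp.le_def]
  intro j
  by_cases hj : j ∈ A
  · have := (Finsupp.le_def.mp hac) j
    rwa [hcA j hj] at this
  · rw [hS a haS j hj]
    exact Nat.zero_le _

section MonomialLemmas

variable {K : Type*} [Field K] {n : ℕ}

lemma span_monomial_mul (S T : Set (Fin n →₀ ℕ)) :
    Ideal.span ((fun a => monomial a (1 : K)) '' S) *
      Ideal.span ((fun a => monomial a (1 : K)) '' T) =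
    Ideal.span ((fun a => monomial a (1 : K)) '' (Set.image2 (· + ·) S T)) := by
  rw [Ideal.span_mul_span']
  congr 1
  rw [Set.image_image2, ← Set.image2_mul, Set.image2_image_left, Set.image2_image_right]
  apply Set.image2_congr
  intro a _ b _
  rw [monomial_mul, one_mul]

lemma span_monomial_pow (S : Set (Fin n →₀ ℕ)) (A : Set (Fin n))
    (hS : ∀ a ∈ S, ∀ j, j ∉ A → a j = 0) :
    ∀ k : ℕ, 1 ≤ k → ∃ T : Set (Fin n →₀ ℕ), (∀ a ∈ T, ∀ j, j ∉ A → a j = 0) ∧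
      (Ideal.span ((fun a => monomial a (1 : K)) '' S)) ^ k =
        Ideal.span ((fun a => monomial a (1 : K)) '' T) := by
  intro k hk
  induction k with
  | zero => omega
  | succ m ih =>
    rcases Nat.eq_or_lt_of_le hk with h1 | h2
    · exact ⟨S, hS, by rw [← h1, pow_one]⟩
    · obtain ⟨T, hT, hTeq⟩ := ih (by omega)
      refine ⟨Set.image2 (· + ·) T S, ?_, ?_⟩
      · rintro a ⟨x, hx, y, hy, rfl⟩ j hj
        rw [Finsupp.add_apply, hT x hx j hj, hS y hy j hj]
      · rw [pow_succ, hTeq, span_monomial_mul]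

lemma primary_monomial_gens {q : Ideal (MvPolynomial (Fin n) K)} (hp : q.IsPrimary)
    (hm : ∃ S : Set (Fin n →₀ ℕ), q = Ideal.span ((fun a => monomial a (1 : K)) '' S)) :
    ∃ S : Set (Fin n →₀ ℕ), (∀ a ∈ S, ∀ j, X j ∉ q.radical → a j = 0) ∧
      q = Ideal.span ((fun a => monomial a (1 : K)) '' S) := by
  classical
  obtain ⟨S, hSeq⟩ := hm
  have hrp : (q.radical).IsPrime := Ideal.isPrime_radical hp
  set P : Fin n → Prop := fun j => X j ∈ q.radical with hP
  refine ⟨(fun a => a.filter P) '' S, ?_, ?_⟩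
  · rintro a ⟨b, _, rfl⟩ j hj
    exact Finsupp.filter_apply_neg _ _ hj
  have key : ∀ a ∈ S, monomial (a.filter P) (1 : K) ∈ q := by
    intro a haS
    have hmem : monomial a (1 : K) ∈ q := hSeq ▸ Ideal.subset_span ⟨a, haS, rfl⟩
    have hsplit : a.filter P + a.filter (fun j => ¬ P j) = a :=
      Finsupp.filter_pos_add_filter_neg a P
    have hprod : monomial (a.filter P) (1 : K) * monomial (a.filter fun j => ¬ P j) (1 : K)
        = monomial a (1 : K) := by
      rw [monomial_mul, one_mul, hsplit]
    have := (Ideal.isPrimary_iff.mp hp).2 (x := monomial (a.filter P) (1 : K))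
      (y := monomial (a.filter fun j => ¬ P j) (1 : K)) (by rw [hprod]; exact hmem)
    rcases this with h | h
    · exact h
    · exfalso
      set b : Fin n →₀ ℕ := a.filter (fun j => ¬ P j) with hb
      have hbmon : monomial b (1 : K) = ∏ j ∈ b.support, (X j : MvPolynomial (Fin n) K) ^ b j := by
        rw [monomial_eq, C_1, one_mul]
        rfl
      rw [hbmon] at h
      rcases (Ideal.IsPrime.prod_mem_iff (hp := hrp)).mp h with ⟨j, hjsup, hjmem⟩
      have hXj : X j ∈ q.radical :=
        hrp.mem_of_pow_mem _ hjmem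
      have : ¬ P j := by
        have := Finsupp.mem_support_iff.mp hjsup
        rw [hb, Finsupp.filter_apply] at this
        by_contra hPj
        simp [hPj] at this
      exact this hXj
  refine le_antisymm ?_ ?_
  · conv_lhs => rw [hSeq]
    apply Ideal.span_le.mpr
    rintro x ⟨a, haS, rfl⟩
    have hsplit : a.filter P + a.filter (fun j => ¬ P j) = a :=
      Finsupp.filter_pos_add_filter_neg a P
    have : monomial a (1 : K) =
        monomial (a.filter fun j => ¬ P j) (1 : K) * monomial (a.filter P) (1 : K) := by
      rw [monomial_mul, one_mul, add_comm, hsplit]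
    show monomial a 1 ∈ Ideal.span _
    rw [this]
    exact Ideal.mul_mem_left _ _ (Ideal.subset_span ⟨a.filter P, ⟨a, haS, rfl⟩, rfl⟩)
  · apply Ideal.span_le.mpr
    rintro x ⟨b, ⟨a, haS, rfl⟩, rfl⟩
    show monomial (Finsupp.filter P a) 1 ∈ (q : Set (MvPolynomial (Fin n) K))
    exact key a haS

lemma exists_free_monomial {q : Ideal (MvPolynomial (Fin n) K)}
    {s : MvPolynomial (Fin n) K} (hs : s ∉ q.radical) :
    ∃ β ∈ s.support, ∀ j, X j ∈ q.radical → β j = 0 := by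
  by_contra hc
  push_neg at hc
  apply hs
  have hmem : s ∈ Ideal.span (X '' {j | X j ∈ q.radical} : Set (MvPolynomial (Fin n) K)) := by
    rw [mem_ideal_span_X_image]
    intro m hm
    obtain ⟨j, hj1, hj2⟩ := hc m hm
    exact ⟨j, hj1, hj2⟩
  refine Ideal.span_le.mpr ?_ hmem
  rintro x ⟨j, hj, rfl⟩
  exact hj

end MonomialLemmas

theorem stmt_19 {K : Type*} [Field K] (n r : ℕ) (hr : 0 < r)
    (q : Fin r → Ideal (MvPolynomial (Fin n) K))
    (hprimary : ∀ i, (q i).IsPrimary)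
    (hmono : ∀ i, IsMonomialIdeal (q i))
    (hrad : ∀ i j, i ≠ j → ¬ (q i).radical ≤ (q j).radical)
    (I : Ideal (MvPolynomial (Fin n) K)) (hI : I = ⨅ i, q i) :
    ∀ k : ℕ, 1 ≤ k → symbolicPower I k = ⨅ i, (q i) ^ k := by
  intro k hk
  classical
  set R := MvPolynomial (Fin n) K
  set p : Fin r → Ideal R := fun i => (q i).radical with hpdef
  have hpprime : ∀ i, (p i).IsPrime := fun i => Ideal.isPrime_radical (hprimary i)
  have hqlep : ∀ i, q i ≤ p i := fun i => Ideal.le_radical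
  have hIle : ∀ i, I ≤ q i := fun i => hI ▸ iInf_le _ i
  have huniq : ∀ i j, p j ≤ p i → j = i := by
    intro i j hle
    by_contra hne
    exact hrad j i hne hle
  -- generators
  have hgen : ∀ i, ∃ S : Set (Fin n →₀ ℕ),
      (∀ a ∈ S, ∀ j, X j ∉ (q i).radical → a j = 0) ∧
      q i = Ideal.span ((fun a => monomial a (1 : K)) '' S) :=
    fun i => primary_monomial_gens (hprimary i) (hmono i)
  choose S hSsupp hSeq using hgen
  have hgenpow : ∀ i, ∃ T : Set (Fin n →₀ ℕ),
      (∀ a ∈ T, ∀ j, j ∉ {j | X j ∈ (q i).radical} → a j = 0) ∧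
      (q i) ^ k = Ideal.span ((fun a => monomial a (1 : K)) '' T) := by
    intro i
    obtain ⟨T, hT1, hT2⟩ := span_monomial_pow (K := K) (S i) {j | X j ∈ (q i).radical}
      (fun a ha j hj => hSsupp i a ha j hj) k hk
    exact ⟨T, hT1, by rw [hSeq i, hT2]⟩
  choose T hTsupp hTeq using hgenpow
  -- membership of primes over I
  have hprodI : (∏ i, q i) ≤ I := by
    rw [hI]
    exact le_iInf fun i => le_trans Ideal.prod_le_inf (Finset.inf_le (Finset.mem_univ i))
  have hIleP : ∀ P : Ideal R, P.IsPrime → (I ≤ P ↔ ∃ i, p i ≤ P) := by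
    intro P hP
    constructor
    · intro hle
      obtain ⟨i, _, hi⟩ := hP.prod_le.mp (le_trans hprodI hle)
      refine ⟨i, ?_⟩
      calc p i = (q i).radical := rfl
      _ ≤ P.radical := Ideal.radical_mono hi
      _ = P := hP.radical
    · rintro ⟨i, hle⟩
      exact le_trans (le_trans (hIle i) (hqlep i)) hle
  have hmin : I.minimalPrimes = Set.range p := by
    ext P
    constructor
    · rintro ⟨⟨hPp, hPI⟩, hPmin⟩
      obtain ⟨i, hi⟩ := (hIleP P hPp).mp hPI
      have hPle : P ≤ p i :=
        hPmin ⟨hpprime i, (hIleP (p i) (hpprime i)).mpr ⟨i, le_refl _⟩⟩ hi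
      exact ⟨i, le_antisymm hi hPle⟩
    · rintro ⟨i, rfl⟩
      refine ⟨⟨hpprime i, (hIleP (p i) (hpprime i)).mpr ⟨i, le_refl _⟩⟩, ?_⟩
      intro Q hQ hQle
      obtain ⟨j, hj⟩ := (hIleP Q hQ.1).mp hQ.2
      have hji : j = i := huniq i j (hj.trans hQle)
      subst hji
      exact hj
  -- localization computation
  have hloc : ∀ i, Ideal.comap (algebraMap R (Localization (@Ideal.primeCompl R _ (p i) (hpprime i))))
      (Ideal.map (algebraMap R (Localization (@Ideal.primeCompl R _ (p i) (hpprime i)))) (I ^ k))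
      = (q i) ^ k := by
    intro i
    ext z
    rw [mem_comap_map_loc]
    constructor
    · rintro ⟨m, hm, hmz⟩
      have hmnot : m ∉ p i := hm
      have hmz2 : m * z ∈ (q i) ^ k := Ideal.pow_right_mono (hIle i) k hmz
      rw [hTeq i] at hmz2 ⊢
      obtain ⟨β, hβ1, hβ2⟩ := exists_free_monomial (q := q i) hmnot
      exact key_cl (hTsupp i) ⟨β, hβ1, fun j hj => hβ2 j hj⟩ hmz2
    · intro hz
      have hw : ∀ j, ∃ w : R, w ∉ p i ∧ (j ≠ i → w ∈ q j) := by
        intro j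
        by_cases hji : j = i
        · refine ⟨1, ?_, fun h => absurd hji h⟩
          intro h1
          exact (hpprime i).ne_top ((Ideal.eq_top_iff_one _).mpr h1)
        · obtain ⟨v, hv1, hv2⟩ := SetLike.not_le_iff_exists.mp (hrad j i hji)
          obtain ⟨mexp, hvm⟩ := hv1
          refine ⟨v ^ mexp, ?_, fun _ => hvm⟩
          intro hmem
          exact hv2 ((hpprime i).mem_of_pow_mem _ hmem)
      choose t ht1 ht2 using hw
      set u : R := ∏ j ∈ Finset.univ.erase i, t j with hu
      have hunot : u ∉ p i := by
        intro hmem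
        obtain ⟨j, _, hjin⟩ := (Ideal.IsPrime.prod_mem_iff (hp := hpprime i)).mp hmem
        exact ht1 j hjin
      have huq : Ideal.span {u} * q i ≤ I := by
        rw [Ideal.span_singleton_mul_le_iff]
        intro z' hz'
        rw [hI, Submodule.mem_iInf]
        intro j
        by_cases hji : j = i
        · subst hji
          exact Ideal.mul_mem_left _ _ hz'
        · have htj : t j ∈ q j := ht2 j hji
          have hdvd : t j ∣ u :=
            Finset.dvd_prod_of_mem t (Finset.mem_erase.mpr ⟨hji, Finset.mem_univ j⟩)
          obtain ⟨w, hwdef⟩ := hdvd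
          rw [hwdef, mul_assoc]
          exact Ideal.mul_mem_right _ _ htj
      refine ⟨u ^ k, ?_, ?_⟩
      · intro hmem
        exact hunot ((hpprime i).mem_of_pow_mem _ hmem)
      · have h1 : u ^ k * z ∈ Ideal.span {u ^ k} * (q i) ^ k :=
          Ideal.mul_mem_mul (Ideal.mem_span_singleton_self _) hz
        have h2 : Ideal.span {u ^ k} * (q i) ^ k = (Ideal.span {u} * q i) ^ k := by
          rw [mul_pow, Ideal.span_singleton_pow]
        have h3 : (Ideal.span {u} * q i) ^ k ≤ I ^ k := Ideal.pow_right_mono huq k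
        exact h3 (h2 ▸ h1)
  -- assembly
  have hset : { L : Ideal R | ∃ (P : Ideal R) (hp : P ∈ I.minimalPrimes),
      L = Ideal.comap (algebraMap R (Localization (@Ideal.primeCompl R _ P hp.1.1)))
        (Ideal.map (algebraMap R (Localization (@Ideal.primeCompl R _ P hp.1.1))) (I ^ k)) }
      = Set.range (fun i => (q i) ^ k) := by
    ext L
    simp only [Set.mem_setOf_eq, Set.mem_range]
    constructor
    · rintro ⟨P, hP, rfl⟩
      have hPr : P ∈ Set.range p := hmin ▸ hP
      obtain ⟨i, rfl⟩ := hPr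
      exact ⟨i, (hloc i).symm⟩
    · rintro ⟨i, rfl⟩
      have hpmem : p i ∈ I.minimalPrimes := by
        rw [hmin]; exact ⟨i, rfl⟩
      exact ⟨p i, hpmem, (hloc i).symm⟩
  rw [symbolicPower, hset, sInf_range]
end
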